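/- arXiv:2411.14287 — 6 statements merged into one kernel-verified Lean document; each statement's English description precedes it below -/
import Mathlib

section
/- Let n ≥ 1 be an integer, ε = (ε_1, …, ε_{2n}) ∈ {±1}^{2n}, and let A be a 2n×2n real SSR(ε) matrix. Then there exists a row vector r ∈ ℝ^{2n} such that the (2n+1)×2n matrix obtained by inserting r as a new row between the n-th and (n+1)-th rows of A is SSR(ε). -/
/-!
Insert `r = ∑_q (-δ)^{d(q)} A_q`, where `d(q)` counts the rows of `A` strictly between row `q`
and the insertion gap. A minor avoiding `r` is a minor of `A`. A minor through `r` is, by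
linearity in that row, `∑_q (-δ)^{d(q)} D_q`, where `D_q` has `A_q` in place of `r`: `D_q = 0`
if `A_q` is already a row of the minor, and otherwise moving `A_q` to its sorted position turns
`D_q` into `±` a minor of `A`. Some row of `A` is missing from the minor, which has at most `2n`
rows including `r`; let `L` be the least `d` of a missing row. All rows with `d < L` are
present, so a missing `A_q` with `d(q) = L` is moved past exactly `L` rows and
`ε_k (-1)^L D_q > 0`. Hence the lowest-order coefficient in `δ` has sign `ε_k` and dominates for
small `δ > 0`; finitely many minors allow a common `δ`.
-/

/-- `A` is strictly sign regular of order `p` with sign pattern `ε` (`SSR_p(ε)`):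
for every `k ∈ {1, …, p}` (here `k = kk.val + 1` for `kk : Fin p`), every `k × k` minor of `A`
(the determinant of the submatrix on any `k` rows and `k` columns taken in increasing order)
has sign `ε k`, i.e. `ε k` times the minor is strictly positive. -/
def IsSSRp (p : ℕ) {m n : ℕ} (A : Matrix (Fin m) (Fin n) ℝ) (ε : Fin p → ℝ) : Prop :=
  ∀ (kk : Fin p) (r : Fin (kk.val + 1) → Fin m) (c : Fin (kk.val + 1) → Fin n),
    StrictMono r → StrictMono c → 0 < ε kk * (A.submatrix r c).det

open Finset Filter Topology

namespace Matrix

variable {R : Type*} [CommRing R] {k : ℕ}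

lemma det_of_insertNth (i : Fin (k + 1)) (v : Fin (k + 1) → R) (B : Fin k → Fin (k + 1) → R) :
    det (of (Fin.insertNth i v B)) =
      ∑ j : Fin (k + 1), (-1) ^ ((i : ℕ) + j) * v j * det (of fun l c => B l (j.succAbove c)) := by
  rw [det_succ_row _ i]
  simp [submatrix]

lemma det_of_insertNth_eq_neg_one_pow_mul (i j : Fin (k + 1)) (v : Fin (k + 1) → R)
    (B : Fin k → Fin (k + 1) → R) :
    det (of (Fin.insertNth i v B)) = (-1) ^ ((i : ℕ) + j) * det (of (Fin.insertNth j v B)) := by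
  simp only [det_of_insertNth, mul_sum]
  refine sum_congr rfl fun l _ => ?_
  have : (-1 : R) ^ ((i : ℕ) + l) = (-1) ^ ((i : ℕ) + j) * (-1) ^ ((j : ℕ) + l) := by
    rw [← pow_add, show (i : ℕ) + j + (j + l) = i + l + 2 * j by ring, pow_add _ (_ + _), pow_mul]
    simp
  rw [this]
  ring

lemma det_of_insertNth_sum {ι : Type*} (i : Fin (k + 1)) (s : Finset ι) (c : ι → R)
    (w : ι → Fin (k + 1) → R) (B : Fin k → Fin (k + 1) → R) :
    det (of (Fin.insertNth i (∑ l ∈ s, c l • w l) B)) =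
      ∑ l ∈ s, c l * det (of (Fin.insertNth i (w l) B)) := by
  simp only [det_of_insertNth, Finset.sum_apply, Pi.smul_apply, smul_eq_mul, mul_sum, sum_mul]
  rw [sum_comm]
  exact sum_congr rfl fun _ _ => sum_congr rfl fun _ _ => by ring

lemma submatrix_insertNth {α m N : Type*} (M : Matrix m N α) (i : Fin (k + 1)) (q : m)
    (σ : Fin k → m) (γ : Fin (k + 1) → N) :
    M.submatrix (Fin.insertNth i q σ) γ =
      of (Fin.insertNth i (fun c => M q (γ c)) fun l c => M (σ l) (γ c)) := by
  ext x c
  cases x using Fin.succAboveCases i <;> simp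

lemma submatrix_of_insertNth_insertNth {α N : Type*} {m : ℕ} (M : Matrix (Fin m) N α)
    (r : N → α) (g : Fin (m + 1)) (i0 : Fin (k + 1)) (σ : Fin k → Fin m) (γ : Fin (k + 1) → N) :
    (of (Fin.insertNth g r M)).submatrix (Fin.insertNth i0 g (g.succAbove ∘ σ)) γ =
      of (Fin.insertNth i0 (fun c => r (γ c)) fun l c => M (σ l) (γ c)) := by
  rw [submatrix_insertNth]
  congr
  · exact funext fun c => congrFun (Fin.insertNth_apply_same (α := fun _ => N → α) g r M) (γ c)
  · exact funext₂ fun l c =>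
      congrFun (Fin.insertNth_apply_succAbove (α := fun _ => N → α) g r M (σ l)) (γ c)

end Matrix

lemma eventually_pos_sum_mul_pow {ι : Type*} (s : Finset ι) (a : ι → ℝ) (e : ι → ℕ) (L : ℕ)
    (hlow : ∀ q ∈ s, e q < L → a q = 0) (hlead : 0 < ∑ q ∈ s with e q = L, a q) :
    ∀ᶠ x in 𝓝[>] (0 : ℝ), 0 < ∑ q ∈ s, a q * x ^ e q := by
  set f : ℝ → ℝ := fun x => ∑ q ∈ s, a q * x ^ (e q - L)
  have hf0 : f 0 = ∑ q ∈ s with e q = L, a q := by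
    rw [sum_filter]
    refine sum_congr rfl fun q hq => ?_
    rcases lt_trichotomy (e q) L with h | h | h
    · simp [hlow q hq h]
    · simp [h]
    · simp [h.ne', Nat.sub_ne_zero_of_lt h]
  have hf : ∀ᶠ x in 𝓝 0, 0 < f x :=
    continuousAt_const.eventually_lt (show Continuous f by fun_prop).continuousAt (hf0 ▸ hlead)
  filter_upwards [nhdsWithin_le_nhds hf, self_mem_nhdsWithin] with x hfx (hx : 0 < x)
  have : ∑ q ∈ s, a q * x ^ e q = x ^ L * f x := by
    rw [mul_sum]
    refine sum_congr rfl fun q hq => ?_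
    rcases lt_or_ge (e q) L with h | h
    · simp [hlow q hq h]
    · rw [← Nat.add_sub_cancel' h, pow_add, Nat.add_sub_cancel_left]
      ring
  rw [this]
  exact mul_pos (pow_pos hx L) hfx

section Positions

variable {k m : ℕ}

lemma card_filter_lt_eq_add_card_filter_mem_Ico {ι : Type*} (s : Finset ι) (f : ι → ℕ) {a b : ℕ}
    (hab : a ≤ b) : #{i ∈ s | f i < b} = #{i ∈ s | f i < a} + #{i ∈ s | f i ∈ Ico a b} := by
  rw [← card_filter_add_card_filter_not (s := {i ∈ s | f i < b}) (fun i => f i < a),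
    filter_filter, filter_filter]
  congr 2 <;> ext i <;> simp only [mem_filter, mem_Ico] <;> grind

lemma card_filter_val_mem_Ico {σ : Fin k → Fin m} (hσ : Function.Injective σ) {a b : ℕ}
    (hb : b ≤ m) (h : ∀ v : Fin m, (v : ℕ) ∈ Ico a b → v ∈ Set.range σ) :
    #{i | (σ i : ℕ) ∈ Ico a b} = b - a := by
  rw [← Nat.card_Ico, ← card_image_of_injective _ (Fin.val_injective.comp hσ)]
  congr 1
  ext v
  simp only [mem_image, mem_filter, mem_univ, true_and, Function.comp_apply]
  refine ⟨fun ⟨i, hi, hiv⟩ => hiv ▸ hi, fun hv => ?_⟩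
  obtain ⟨i, hi⟩ := h ⟨v, by rw [mem_Ico] at hv; omega⟩ hv
  exact ⟨i, by simp [hi, hv], by simp [hi]⟩

lemma val_eq_card_filter_of_strictMono_insertNth {α : Type*} [LinearOrder α] {j : Fin (k + 1)}
    {q : α} {σ : Fin k → α} (h : StrictMono (Fin.insertNth j q σ)) :
    (j : ℕ) = #{i | σ i < q} := by
  obtain ⟨-, hlt, hgt⟩ := (Fin.strictMono_insertNth_iff _ _ _).1 h
  have hiff : ∀ i, σ i < q ↔ (i : ℕ) < j := fun i =>
    ⟨fun hi => by_contra fun hij =>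
        (hgt i (by rw [Fin.le_iff_val_le_val, Fin.val_castSucc]; omega)).asymm hi,
      fun hi => hlt i (by rwa [Fin.lt_def, Fin.val_castSucc])⟩
  simp_rw [hiff, Fin.card_filter_val_lt]
  omega

lemma exists_strictMono_insertNth {σ : Fin k → Fin m} (hσ : StrictMono σ) {q : Fin m}
    (hq : q ∉ Set.range σ) :
    ∃ j : Fin (k + 1), (j : ℕ) = #{i | (σ i : ℕ) < q} ∧ StrictMono (Fin.insertNth j q σ) := by
  have hpos : ∀ i, (σ i : ℕ) < q ↔ (i : ℕ) < #{i | (σ i : ℕ) < q} := fun i =>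
    (Fin.lt_card_filter_univ_iff_apply_of_imp _ fun a b hba h => (hσ.monotone hba).trans_lt h).symm
  have hcard : #{i | (σ i : ℕ) < q} < k + 1 :=
    Nat.lt_succ_of_le ((card_filter_le _ _).trans_eq (card_fin k))
  refine ⟨⟨_, hcard⟩, rfl, (Fin.strictMono_insertNth_iff _ _ _).2
    ⟨hσ, fun i hi => (hpos i).2 hi, fun i hi => ?_⟩⟩
  have hne : (σ i : ℕ) ≠ q := fun h => hq ⟨i, Fin.ext h⟩
  have := mt (hpos i).1 (not_lt.2 hi)
  rw [Fin.lt_def]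
  omega

lemma exists_eq_insertNth_succAbove {ρ : Fin (k + 1) → Fin (m + 1)} (hρ : StrictMono ρ)
    {i0 : Fin (k + 1)} {g : Fin (m + 1)} (h : ρ i0 = g) :
    ∃ σ : Fin k → Fin m, StrictMono σ ∧ ρ = Fin.insertNth i0 g (g.succAbove ∘ σ) ∧
      (i0 : ℕ) = #{i | (σ i : ℕ) < g} := by
  have hne : ∀ i, ρ (i0.succAbove i) ≠ g := fun i he =>
    Fin.succAbove_ne i0 i (hρ.injective (he.trans h.symm))
  choose σ hσ using fun i => Fin.exists_succAbove_eq (hne i)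
  have hρσ : ρ = Fin.insertNth i0 g (g.succAbove ∘ σ) := by
    rw [Fin.eq_insertNth_iff]
    exact ⟨h, funext fun i => (hσ i).symm⟩
  rw [hρσ] at hρ
  refine ⟨σ, fun a b hab => (Fin.strictMono_succAbove g).lt_iff_lt.1
    (((Fin.strictMono_insertNth_iff _ _ _).1 hρ).1 hab), hρσ, ?_⟩
  rw [val_eq_card_filter_of_strictMono_insertNth hρ]
  simp only [Function.comp_apply, Fin.succAbove_lt_iff_castSucc_lt]
  simp only [Fin.lt_def, Fin.val_castSucc]

end Positions

/-- For the gap before row `g` (between rows `g - 1` and `g`), the number of rows strictly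
between row `q` and the gap. -/
def gapDist (g q : ℕ) : ℕ := if q < g then g - 1 - q else q - g

lemma neg_one_pow_card_filter_lt_add_card_filter_lt {k m : ℕ} {σ : Fin k → Fin m}
    (hσ : Function.Injective σ) {g : ℕ} (hg : g ≤ m) {q : Fin m} (hq : q ∉ Set.range σ)
    (hmin : ∀ v : Fin m, gapDist g v < gapDist g q → v ∈ Set.range σ) :
    (-1 : ℝ) ^ (#{i | (σ i : ℕ) < g} + #{i | (σ i : ℕ) < q}) = (-1) ^ gapDist g q := by
  have hne : ∀ i, (σ i : ℕ) ≠ q := fun i h => hq ⟨i, Fin.ext h⟩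
  obtain ⟨c, hc⟩ : ∃ c, #{i | (σ i : ℕ) < g} + #{i | (σ i : ℕ) < q} = 2 * c + gapDist g q := by
    by_cases hqg : (q : ℕ) < g
    · have hq1 : #{i | (σ i : ℕ) < q + 1} = #{i | (σ i : ℕ) < q} := by
        congr 1
        ext i
        have := hne i
        simp only [mem_filter, mem_univ, true_and]
        omega
      have hblock := card_filter_val_mem_Ico hσ hg (a := q + 1) fun v hv =>
        hmin v (by simp only [gapDist, mem_Ico] at hv ⊢; split_ifs <;> omega)
      rw [card_filter_lt_eq_add_card_filter_mem_Ico _ _ (a := q + 1) (b := g) hqg, hq1, hblock]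
      exact ⟨#{i | (σ i : ℕ) < q}, by simp only [gapDist, if_pos hqg]; omega⟩
    · have hblock := card_filter_val_mem_Ico hσ q.isLt.le (a := g) fun v hv =>
        hmin v (by simp only [gapDist, mem_Ico] at hv ⊢; split_ifs <;> omega)
      rw [card_filter_lt_eq_add_card_filter_mem_Ico _ _ (a := g) (b := q) (not_lt.1 hqg), hblock]
      exact ⟨#{i | (σ i : ℕ) < g}, by simp only [gapDist, if_neg hqg]; omega⟩
  rw [hc, pow_add, pow_mul]
  simp

noncomputable def gapRow {m N : ℕ} (A : Matrix (Fin m) (Fin N) ℝ) (g : ℕ) (δ : ℝ) : Fin N → ℝ :=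
  ∑ q : Fin m, (-δ) ^ gapDist g q • A q

section Minors

variable {k m N : ℕ} (A : Matrix (Fin m) (Fin N) ℝ) (i0 : Fin (k + 1)) {e : ℝ}
  {γ : Fin (k + 1) → Fin N} {σ : Fin k → Fin m} {g : ℕ}

lemma det_of_insertNth_row_eq_zero {q : Fin m} (hq : q ∈ Set.range σ) :
    (Matrix.of (Fin.insertNth i0 (fun c => A q (γ c)) fun l c => A (σ l) (γ c))).det = 0 := by
  obtain ⟨l, rfl⟩ := hq
  exact Matrix.det_zero_of_row_eq (Fin.succAbove_ne i0 l).symm (funext fun c => by simp)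

lemma pos_mul_neg_one_pow_gapDist_mul_det
    (hA : ∀ τ, StrictMono τ → 0 < e * (A.submatrix τ γ).det) (hσ : StrictMono σ) (hg : g ≤ m)
    (hi0 : (i0 : ℕ) = #{i | (σ i : ℕ) < g}) {q : Fin m} (hq : q ∉ Set.range σ)
    (hmin : ∀ v : Fin m, gapDist g v < gapDist g q → v ∈ Set.range σ) :
    0 < e * ((-1) ^ gapDist g q *
      (Matrix.of (Fin.insertNth i0 (fun c => A q (γ c)) fun l c => A (σ l) (γ c))).det) := by
  obtain ⟨j, hj, hτ⟩ := exists_strictMono_insertNth hσ hq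
  rw [Matrix.det_of_insertNth_eq_neg_one_pow_mul i0 j, ← Matrix.submatrix_insertNth, hi0, hj,
    neg_one_pow_card_filter_lt_add_card_filter_lt hσ.injective hg hq hmin,
    ← mul_assoc ((-1 : ℝ) ^ _), ← pow_add, ← two_mul, pow_mul]
  simpa using hA _ hτ

lemma eventually_pos_det_of_insertNth_gapRow
    (hA : ∀ τ, StrictMono τ → 0 < e * (A.submatrix τ γ).det) (hσ : StrictMono σ) (hg : g ≤ m)
    (hkm : k < m) (hi0 : (i0 : ℕ) = #{i | (σ i : ℕ) < g}) :
    ∀ᶠ δ in 𝓝[>] 0, 0 < e * (Matrix.of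
      (Fin.insertNth i0 (fun c => gapRow A g δ (γ c)) fun l c => A (σ l) (γ c))).det := by
  set D : Fin m → ℝ := fun q => (Matrix.of (Fin.insertNth i0 (fun c => A q (γ c))
    fun l c => A (σ l) (γ c))).det
  have hexpand : ∀ δ, e * (Matrix.of (Fin.insertNth i0 (fun c => gapRow A g δ (γ c))
      fun l c => A (σ l) (γ c))).det =
      ∑ q : Fin m, e * ((-1) ^ gapDist g q * D q) * δ ^ gapDist g q := by
    intro δ
    have : (fun c => gapRow A g δ (γ c)) =
        ∑ q : Fin m, (-δ) ^ gapDist g q • fun c => A q (γ c) := by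
      ext c
      simp [gapRow]
    rw [this, Matrix.det_of_insertNth_sum, mul_sum]
    refine sum_congr rfl fun q _ => ?_
    rw [neg_pow]
    ring
  obtain ⟨q0, hq0⟩ : ∃ q, q ∉ Set.range σ := by
    by_contra! h
    exact hkm.not_ge (by simpa using Fintype.card_le_of_surjective σ h)
  obtain ⟨q1, hq1, hq1min⟩ := exists_min_image {q | q ∉ Set.range σ} (gapDist g ·)
    ⟨q0, by simpa using hq0⟩
  have hbelow : ∀ v : Fin m, gapDist g v < gapDist g q1 → v ∈ Set.range σ := fun v hv =>
    by_contra fun h => (hq1min v (by simpa using h)).not_gt hv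
  simp only [hexpand]
  refine eventually_pos_sum_mul_pow _ _ _ (gapDist g q1) (fun q _ hq => ?_) ?_
  · simp [D, det_of_insertNth_row_eq_zero A i0 (hbelow q hq)]
  have hlead : ∀ q : Fin m, gapDist g q = gapDist g q1 → q ∉ Set.range σ →
      0 < e * ((-1) ^ gapDist g q * D q) := fun q hq hqσ =>
    pos_mul_neg_one_pow_gapDist_mul_det A i0 hA hσ hg hi0 hqσ (hq ▸ hbelow)
  refine sum_pos' (fun q hq => ?_) ⟨q1, by simp, hlead q1 rfl (by simpa using hq1)⟩
  by_cases hqσ : q ∈ Set.range σ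
  · simp [D, det_of_insertNth_row_eq_zero A i0 hqσ]
  · exact (hlead q (mem_filter.1 hq).2 hqσ).le

end Minors

lemma IsSSRp.eventually_pos_minor_insertNth_gapRow {p m N : ℕ} {A : Matrix (Fin m) (Fin N) ℝ}
    {ε : Fin p → ℝ} (hA : IsSSRp p A ε) (hpm : p ≤ m) (g : Fin (m + 1)) (kk : Fin p)
    {ρ : Fin (kk + 1) → Fin (m + 1)} {γ : Fin (kk + 1) → Fin N} (hρ : StrictMono ρ)
    (hγ : StrictMono γ) :
    ∀ᶠ δ in 𝓝[>] 0,
      0 < ε kk * ((Matrix.of (Fin.insertNth g (gapRow A g δ) A)).submatrix ρ γ).det := by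
  by_cases hg : ∃ i0, ρ i0 = g
  · obtain ⟨i0, hi0⟩ := hg
    obtain ⟨σ, hσ, rfl, hcount⟩ := exists_eq_insertNth_succAbove hρ hi0
    simp only [Matrix.submatrix_of_insertNth_insertNth]
    exact eventually_pos_det_of_insertNth_gapRow A i0 (fun τ hτ => hA kk τ γ hτ hγ) hσ
      (Nat.le_of_lt_succ g.isLt) (kk.isLt.trans_le hpm) hcount
  · simp only [not_exists] at hg
    choose τ hτ using fun i => Fin.exists_succAbove_eq (hg i)
    obtain rfl : ρ = g.succAbove ∘ τ := funext fun i => (hτ i).symm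
    refine Eventually.of_forall fun δ => ?_
    have : (Matrix.of (Fin.insertNth g (gapRow A g δ) A)).submatrix (g.succAbove ∘ τ) γ =
        A.submatrix τ γ := by
      ext i c
      exact congrFun (Fin.insertNth_apply_succAbove (α := fun _ => Fin N → ℝ) g _ A (τ i)) (γ c)
    rw [this]
    exact hA kk τ γ (fun a b hab => (Fin.strictMono_succAbove g).lt_iff_lt.1 (hρ hab)) hγ

theorem IsSSRp.exists_insertNth_row {p m N : ℕ} {A : Matrix (Fin m) (Fin N) ℝ}
    {ε : Fin p → ℝ} (hA : IsSSRp p A ε) (hpm : p ≤ m) (g : Fin (m + 1)) :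
    ∃ r, IsSSRp p (Matrix.of (Fin.insertNth g r A)) ε := by
  suffices ∀ᶠ δ in 𝓝[>] (0 : ℝ), IsSSRp p (Matrix.of (Fin.insertNth g (gapRow A g δ) A)) ε by
    obtain ⟨δ, hδ⟩ := this.exists
    exact ⟨_, hδ⟩
  simp only [IsSSRp, eventually_all]
  intro kk ρ γ hρ hγ
  exact hA.eventually_pos_minor_insertNth_gapRow hpm g kk hρ hγ

theorem stmt_12 (n : ℕ) (ε : Fin (2 * n) → ℝ)
    (A : Matrix (Fin (2 * n)) (Fin (2 * n)) ℝ) (hA : IsSSRp (2 * n) A ε) :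
    ∃ r : Fin (2 * n) → ℝ,
      IsSSRp (2 * n)
        ((Matrix.of (Fin.insertNth (⟨n, by omega⟩ : Fin (2 * n + 1)) r (fun i => A i))) :
          Matrix (Fin (2 * n + 1)) (Fin (2 * n)) ℝ) ε :=
  IsSSRp.exists_insertNth_row hA le_rfl _
end

section
/- Let m ≥ 1 and n ≥ 2 be integers, ε = (ε_1, …, ε_{min{m,n}}) ∈ {±1}^{min{m,n}}, let A be an m×n real SSR(ε) matrix, and fix k ∈ {1, …, n−1}. Then there exists a column vector c ∈ ℝ^m such that the m×(n+1) matrix obtained by inserting c between the k-th and (k+1)-th columns of A is SSR(ε′), where ε′_i = ε_i for all i ∈ {1, …, min{m,n}}. Moreover, if m > n (so that minors of size min{m,n}+1 = n+1 occur in the enlarged matrix), then for either prescribed choice of η ∈ {±1} the column c can be chosen so that additionally ε′_{n+1} = η. -/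
open Finset Filter

namespace SSR13




lemma val_succAbove {n : ℕ} (p : Fin (n+1)) (i : Fin n) :
    ((p.succAbove i : Fin (n+1)) : ℕ) = if (i:ℕ) < (p:ℕ) then (i:ℕ) else (i:ℕ)+1 := by
  rw [Fin.succAbove]
  split_ifs with h1 h2 h3 <;>
    simp_all [Fin.lt_def, Fin.coe_castSucc, Fin.val_succ]

/-- delete the `k`-th coordinate -/
def del {n : ℕ} (k : ℕ) (hk1 : 1 ≤ k) (hkn : k ≤ n) (x : Fin (n+1)) : Fin n :=
  if h : (x:ℕ) < k then ⟨x, by omega⟩ else ⟨(x:ℕ)-1, by have := x.isLt; omega⟩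

section Del
variable {n : ℕ} {k : ℕ} (hk1 : 1 ≤ k) (hkn : k ≤ n)

lemma val_del (x : Fin (n+1)) :
    ((del k hk1 hkn x : Fin n) : ℕ) = if (x:ℕ) < k then (x:ℕ) else (x:ℕ)-1 := by
  rw [del]; split_ifs <;> rfl

lemma succAbove_del {x : Fin (n+1)} (hx : (x:ℕ) ≠ k) :
    (⟨k, by omega⟩ : Fin (n+1)).succAbove (del k hk1 hkn x) = x := by
  apply Fin.ext
  rw [val_succAbove]
  have hv := val_del hk1 hkn x
  have := x.isLt
  have hK : ((⟨k, by omega⟩ : Fin (n+1)) : ℕ) = k := rfl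
  rw [hK]
  split_ifs at hv ⊢ <;> omega

lemma del_succAbove (i : Fin n) :
    del k hk1 hkn ((⟨k, by omega⟩ : Fin (n+1)).succAbove i) = i := by
  apply Fin.ext
  rw [val_del, val_succAbove]
  have := i.isLt
  have hK : ((⟨k, by omega⟩ : Fin (n+1)) : ℕ) = k := rfl
  rw [hK]
  split_ifs <;> simp <;> omega

lemma del_lt_del {x y : Fin (n+1)} (hx : (x:ℕ) ≠ k) (hy : (y:ℕ) ≠ k) (hxy : x < y) :
    del k hk1 hkn x < del k hk1 hkn y := by
  have hvx := val_del hk1 hkn x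
  have hvy := val_del hk1 hkn y
  rw [Fin.lt_def] at *
  split_ifs at hvx hvy <;> omega

lemma del_lt_iff {x : Fin (n+1)} (hx : (x:ℕ) ≠ k) :
    ((del k hk1 hkn x : Fin n) : ℕ) < k ↔ (x:ℕ) < k := by
  have hvx := val_del hk1 hkn x
  split_ifs at hvx <;> omega

end Del

lemma strictMono_fin_id {q : ℕ} (t : Fin q → Fin q) (ht : StrictMono t) : t = id := by
  have H : ∀ (f : Fin q → Fin q), StrictMono f → ∀ v (h : v < q), v ≤ (f ⟨v, h⟩ : ℕ) := by
    intro f hf v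
    induction v with
    | zero => intro h; omega
    | succ w ih =>
      intro h
      have h2 : w < q := by omega
      have hlt := hf (show (⟨w, h2⟩ : Fin q) < ⟨w+1, h⟩ by simp [Fin.lt_def])
      have := ih h2
      rw [Fin.lt_def] at hlt
      omega
  have h1 : ∀ i : Fin q, (i : ℕ) ≤ t i := fun i => by
    simpa using H t ht i i.isLt
  have hrev : StrictMono (fun i : Fin q => (t i.rev).rev) := by
    intro a b hab
    simp only [Fin.rev_lt_rev]
    exact ht (by simpa [Fin.rev_lt_rev] using hab)
  have h2 : ∀ i : Fin q, (i : ℕ) ≤ ((t i.rev).rev : ℕ) := fun i => by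
    simpa using H _ hrev i i.isLt
  funext i
  have := h2 i.rev
  simp only [Fin.rev_rev, Fin.val_rev] at this
  have := h1 i
  have := (t i).isLt
  have := i.isLt
  apply Fin.ext
  simp only [id_eq]
  omega



lemma det_submatrix_expand {R : Type*} [CommRing R] {m' q s : ℕ}
    (M : Matrix (Fin m') (Fin q) R) (r : Fin (s+1) → Fin m') (c : Fin (s+1) → Fin q)
    (l : Fin (s+1)) :
    (M.submatrix r c).det =
      (-1:R)^(l:ℕ) * ∑ i : Fin (s+1), (-1:R)^(i:ℕ) * M (r i) (c l) *
        (M.submatrix (fun a => r (i.succAbove a)) (fun a => c (l.succAbove a))).det := by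
  rw [Matrix.det_succ_column (M.submatrix r c) l, Finset.mul_sum]
  refine Finset.sum_congr rfl fun i _ => ?_
  rw [Matrix.submatrix_submatrix]
  simp only [Matrix.submatrix_apply, Function.comp_def]
  rw [pow_add]
  ring

lemma sum_eq_insert_det {R : Type*} [CommRing R] {m' q s : ℕ}
    (M : Matrix (Fin m') (Fin q) R) (r : Fin (s+1) → Fin m') (u : Fin s → Fin q)
    (j : Fin q) (l : Fin (s+1)) :
    ∑ i : Fin (s+1), (-1:R)^(i:ℕ) * M (r i) j *
        (M.submatrix (fun a => r (i.succAbove a)) u).det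
      = (-1:R)^(l:ℕ) * (M.submatrix r (l.insertNth j u)).det := by
  rw [det_submatrix_expand M r (l.insertNth j u) l, ← mul_assoc, ← pow_add]
  have he : (-1:R)^((l:ℕ)+(l:ℕ)) = 1 := Even.neg_one_pow ⟨l, rfl⟩
  rw [he, one_mul]
  refine Finset.sum_congr rfl fun i _ => ?_
  simp only [Fin.insertNth_apply_same, Fin.insertNth_apply_succAbove]

lemma insert_det_zero {R : Type*} [CommRing R] {m' q s : ℕ}
    (M : Matrix (Fin m') (Fin q) R) (r : Fin (s+1) → Fin m') (u : Fin s → Fin q)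
    (j : Fin q) (l : Fin (s+1)) (i0 : Fin s) (hj : u i0 = j) :
    (M.submatrix r (l.insertNth j u)).det = 0 := by
  apply Matrix.det_zero_of_column_eq (Fin.ne_succAbove l i0)
  intro x
  simp [Fin.insertNth_apply_same, Fin.insertNth_apply_succAbove, hj]

lemma card_filter_val_lt {s lv : ℕ} (h : lv ≤ s) :
    (univ.filter (fun i : Fin s => (i:ℕ) < lv)).card = lv := by
  have h2 : (univ.filter (fun i : Fin s => (i:ℕ) < lv)).card
      = ((Finset.range s).filter (fun x => x < lv)).card := by
    refine Finset.card_bij (fun i _ => (i:ℕ)) ?_ ?_ ?_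
    · intro a ha; simp only [mem_filter, mem_univ, true_and] at ha
      simp only [mem_filter, mem_range]
      exact ⟨a.isLt, ha⟩
    · intro a _ b _ hab; exact Fin.ext hab
    · intro b hb; simp only [mem_filter, mem_range] at hb
      exact ⟨⟨b, hb.1⟩, by simp [hb.2], rfl⟩
  rw [h2]
  have : (Finset.range s).filter (fun x => x < lv) = Finset.range lv := by
    ext x; simp only [mem_filter, mem_range]; omega
  rw [this, Finset.card_range]

/-- position at which to insert `j` into the strictly increasing tuple `u` -/
def inspos {s q : ℕ} (u : Fin s → Fin q) (j : Fin q) : Fin (s+1) :=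
  ⟨(univ.filter (fun i => u i < j)).card,
    Nat.lt_succ_of_le (le_trans (Finset.card_filter_le _ _) (by simp))⟩

lemma lt_inspos_iff {s q : ℕ} {u : Fin s → Fin q} (hu : StrictMono u) (j : Fin q)
    (i : Fin s) : (i:ℕ) < (inspos u j : ℕ) ↔ u i < j := by
  constructor
  · intro hi
    by_contra hne
    have hsub : (univ.filter (fun i => u i < j)) ⊆ Finset.Iio i := by
      intro x hx
      simp only [mem_filter, mem_univ, true_and] at hx
      simp only [mem_Iio]
      exact hu.lt_iff_lt.mp (lt_of_lt_of_le hx (le_of_not_gt hne))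
    have := Finset.card_le_card hsub
    rw [Fin.card_Iio] at this
    exact absurd hi (by simpa [inspos] using Nat.not_lt.2 this)
  · intro hi
    have hsub : Finset.Iic i ⊆ (univ.filter (fun i => u i < j)) := by
      intro x hx
      simp only [mem_Iic] at hx
      simp only [mem_filter, mem_univ, true_and]
      exact lt_of_le_of_lt (hu.monotone hx) hi
    have := Finset.card_le_card hsub
    rw [Fin.card_Iic] at this
    simpa [inspos] using this

lemma strictMono_insertNth {s q : ℕ} {u : Fin s → Fin q} (hu : StrictMono u)
    {j : Fin q} (hj : ∀ i, u i ≠ j) : StrictMono ((inspos u j).insertNth j u) := by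
  set p := inspos u j with hp
  intro a b hab
  by_cases ha : a = p <;> by_cases hb : b = p
  · exact absurd (ha ▸ hb ▸ hab) (lt_irrefl _)
  · obtain ⟨ib, rfl⟩ := Fin.exists_succAbove_eq hb
    subst ha
    rw [Fin.insertNth_apply_same, Fin.insertNth_apply_succAbove]
    have h1 : p ≤ ib.castSucc := (Fin.lt_succAbove_iff_le_castSucc p ib).mp hab
    have h2 : ¬ (u ib < j) := by
      rw [← lt_inspos_iff hu j ib]
      simp only [Fin.le_def, Fin.coe_castSucc] at h1
      omega
    exact lt_of_le_of_ne (not_lt.mp h2) (Ne.symm (hj ib))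
  · obtain ⟨ia, rfl⟩ := Fin.exists_succAbove_eq ha
    subst hb
    rw [Fin.insertNth_apply_same, Fin.insertNth_apply_succAbove]
    have h1 : ia.castSucc < p := (Fin.succAbove_lt_iff_castSucc_lt p ia).mp hab
    rw [← lt_inspos_iff hu j ia]
    simpa [Fin.lt_def] using h1
  · obtain ⟨ia, rfl⟩ := Fin.exists_succAbove_eq ha
    obtain ⟨ib, rfl⟩ := Fin.exists_succAbove_eq hb
    rw [Fin.insertNth_apply_succAbove, Fin.insertNth_apply_succAbove]
    exact hu (Fin.succAbove_lt_succAbove_iff.mp hab)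

lemma sumpos {ι : Type*} (S : Finset ι) (e : ι → ℕ) (w : ι → ℝ) (i0 : ι) (hi0 : i0 ∈ S)
    (he : ∀ i ∈ S, i ≠ i0 → e i0 < e i ∨ w i = 0) (hw : 0 < w i0) :
    ∀ᶠ δ in nhdsWithin 0 (Set.Ioi (0:ℝ)), 0 < ∑ i ∈ S, w i * δ ^ e i := by
  set h : ℝ → ℝ := fun δ => ∑ i ∈ S, w i * δ ^ (e i - e i0) with hh
  have hcont : Continuous h :=
    continuous_finset_sum _ fun i _ => continuous_const.mul (continuous_pow _)
  have h0 : h 0 = w i0 := by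
    rw [hh]
    simp only
    rw [Finset.sum_eq_single i0]
    · simp
    · intro i hi hne
      rcases he i hi hne with hlt | hw0
      · rw [zero_pow (by omega), mul_zero]
      · rw [hw0, zero_mul]
    · intro habs; exact absurd hi0 habs
  have hev : ∀ᶠ δ in nhds (0:ℝ), 0 < h δ := by
    have : h ⁻¹' (Set.Ioi 0) ∈ nhds (0:ℝ) :=
      hcont.continuousAt.preimage_mem_nhds (Ioi_mem_nhds (h0 ▸ hw))
    filter_upwards [this] with δ hδ using hδ
  filter_upwards [eventually_nhdsWithin_of_eventually_nhds hev, self_mem_nhdsWithin]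
    with δ h1 h2
  have hδ : (0:ℝ) < δ := h2
  have key : ∑ i ∈ S, w i * δ ^ e i = δ ^ (e i0) * h δ := by
    rw [hh, Finset.mul_sum]
    refine Finset.sum_congr rfl fun i hi => ?_
    by_cases hne : i = i0
    · subst hne; simp [Nat.sub_self, mul_comm]
    · rcases he i hi hne with hlt | hw0
      · rw [← mul_assoc, mul_comm (δ ^ e i0) (w i), mul_assoc, ← pow_add]
        congr 2
        omega
      · rw [hw0, zero_mul, zero_mul, mul_zero]
  rw [key]
  exact mul_pos (pow_pos hδ _) h1



def oexp (k j : ℕ) : ℕ := if k ≤ j then 2*(j-k)+1 else 2*(k-1-j)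

lemma oexp_inj {k a b : ℕ} (hk : 1 ≤ k) (h : oexp k a = oexp k b) : a = b := by
  unfold oexp at h; split_ifs at h <;> omega

noncomputable def sgnc (k j : ℕ) : ℝ := (-1)^(if k ≤ j then j-k else k-1-j)

lemma parity_sign {n s k : ℕ} (hk1 : 1 ≤ k) (hkn : k ≤ n) {u : Fin s → Fin n}
    (hu : Function.Injective u) {js : Fin n} (hjs : ∀ i, u i ≠ js)
    (hdom : ∀ j : Fin n, oexp k (j:ℕ) < oexp k (js:ℕ) → ∃ i, u i = j) :
    (-1:ℝ)^((univ.filter (fun i => (u i:ℕ) < k)).card)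
      * (-1:ℝ)^((inspos u js : Fin (s+1)):ℕ) * sgnc k (js:ℕ) = 1 := by
  set L := (univ.filter (fun i => (u i:ℕ) < k)).card with hL
  have hP : ((inspos u js : Fin (s+1)):ℕ) = (univ.filter (fun i => u i < js)).card := rfl
  set P := (univ.filter (fun i => u i < js)).card with hPd
  rw [hP]
  by_cases hc : k ≤ (js:ℕ)
  · -- P = L + (js - k)
    have hsplit : univ.filter (fun i : Fin s => u i < js)
        = univ.filter (fun i => (u i:ℕ) < k)
          ∪ univ.filter (fun i => k ≤ (u i:ℕ) ∧ (u i:ℕ) < (js:ℕ)) := by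
      ext x
      simp only [mem_filter, mem_union, mem_univ, true_and, Fin.lt_def]
      omega
    have hdisj : Disjoint (univ.filter (fun i : Fin s => (u i:ℕ) < k))
        (univ.filter (fun i => k ≤ (u i:ℕ) ∧ (u i:ℕ) < (js:ℕ))) := by
      rw [Finset.disjoint_left]
      intro x hx hx2
      simp only [mem_filter, mem_univ, true_and] at hx hx2
      omega
    have hIco : (univ.filter (fun i : Fin s => k ≤ (u i:ℕ) ∧ (u i:ℕ) < (js:ℕ))).card
        = (js:ℕ) - k := by
      rw [← Nat.card_Ico k (js:ℕ)]
      refine Finset.card_bij (fun i _ => (u i:ℕ)) ?_ ?_ ?_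
      · intro a ha
        simp only [mem_filter, mem_univ, true_and] at ha
        simp only [Finset.mem_Ico]
        exact ha
      · intro a _ b _ hab
        exact hu (Fin.ext hab)
      · intro x hx
        simp only [Finset.mem_Ico] at hx
        have hxn : x < n := lt_trans hx.2 js.isLt
        have hox : oexp k x < oexp k (js:ℕ) := by
          simp only [oexp, if_pos hc, if_pos hx.1]
          omega
        obtain ⟨i, hi⟩ := hdom ⟨x, hxn⟩ hox
        refine ⟨i, ?_, by simp [hi]⟩
        simp only [mem_filter, mem_univ, true_and, hi]
        exact hx
    have hPL : P = L + ((js:ℕ) - k) := by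
      rw [hPd, hsplit, Finset.card_union_of_disjoint hdisj, hIco]
    have hs : sgnc k (js:ℕ) = (-1:ℝ)^((js:ℕ) - k) := by rw [sgnc, if_pos hc]
    rw [hs, hPL, ← pow_add, ← pow_add]
    exact Even.neg_one_pow ⟨L + ((js:ℕ) - k), by omega⟩
  · -- js < k : L = P + (k-1-js)
    push_neg at hc
    have hsplit : univ.filter (fun i : Fin s => (u i:ℕ) < k)
        = univ.filter (fun i => u i < js)
          ∪ univ.filter (fun i => (js:ℕ) < (u i:ℕ) ∧ (u i:ℕ) < k) := by
      ext x
      have hne : (u x : ℕ) ≠ (js:ℕ) := fun h => hjs x (Fin.ext h)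
      simp only [mem_filter, mem_union, mem_univ, true_and, Fin.lt_def]
      omega
    have hdisj : Disjoint (univ.filter (fun i : Fin s => u i < js))
        (univ.filter (fun i => (js:ℕ) < (u i:ℕ) ∧ (u i:ℕ) < k)) := by
      rw [Finset.disjoint_left]
      intro x hx hx2
      simp only [mem_filter, mem_univ, true_and, Fin.lt_def] at hx hx2
      omega
    have hIco : (univ.filter (fun i : Fin s => (js:ℕ) < (u i:ℕ) ∧ (u i:ℕ) < k)).card
        = k - 1 - (js:ℕ) := by
      have hcard : (Finset.Ico ((js:ℕ)+1) k).card = k - 1 - (js:ℕ) := by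
        rw [Nat.card_Ico]; omega
      rw [← hcard]
      refine Finset.card_bij (fun i _ => (u i:ℕ)) ?_ ?_ ?_
      · intro a ha
        simp only [mem_filter, mem_univ, true_and] at ha
        simp only [Finset.mem_Ico]
        omega
      · intro a _ b _ hab
        exact hu (Fin.ext hab)
      · intro x hx
        simp only [Finset.mem_Ico] at hx
        have hxn : x < n := by omega
        have hox : oexp k x < oexp k (js:ℕ) := by
          simp only [oexp, if_neg (by omega : ¬ k ≤ x), if_neg (by omega : ¬ k ≤ (js:ℕ))]
          omega
        obtain ⟨i, hi⟩ := hdom ⟨x, hxn⟩ hox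
        refine ⟨i, ?_, by simp [hi]⟩
        simp only [mem_filter, mem_univ, true_and, hi]
        omega
    have hPL : L = P + (k - 1 - (js:ℕ)) := by
      rw [hL, hPd, hsplit, Finset.card_union_of_disjoint hdisj, hIco]
    have hs : sgnc k (js:ℕ) = (-1:ℝ)^(k - 1 - (js:ℕ)) := by
      rw [sgnc, if_neg (by omega)]
    rw [hs, hPL, ← pow_add, ← pow_add]
    exact Even.neg_one_pow ⟨P + (k - 1 - (js:ℕ)), by omega⟩



/-- the enlarged matrix with column `c` inserted at position `k` -/
def Bmat {m n : ℕ} (k : ℕ) (hk : k < n+1) (A : Matrix (Fin m) (Fin n) ℝ) (c : Fin m → ℝ) :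
    Matrix (Fin m) (Fin (n+1)) ℝ :=
  Matrix.of fun i => Fin.insertNth (⟨k, hk⟩ : Fin (n+1)) (c i) (A i)

lemma Bmat_apply_K {m n k : ℕ} (hk1 : 1 ≤ k) (hkn : k ≤ n) (A : Matrix (Fin m) (Fin n) ℝ)
    (c : Fin m → ℝ) (x : Fin m) :
    Bmat k (by omega) A c x ⟨k, by omega⟩ = c x := by
  simp [Bmat, Fin.insertNth_apply_same]

lemma Bmat_apply_ne {m n k : ℕ} (hk1 : 1 ≤ k) (hkn : k ≤ n) (A : Matrix (Fin m) (Fin n) ℝ)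
    (c : Fin m → ℝ) (x : Fin m) {y : Fin (n+1)} (hy : (y:ℕ) ≠ k) :
    Bmat k (by omega) A c x y = A x (del k hk1 hkn y) := by
  have h := succAbove_del hk1 hkn hy
  conv_lhs => rw [← h]
  simp [Bmat, Fin.insertNth_apply_succAbove]

lemma tne {n k s : ℕ} (hkn : k ≤ n) {t : Fin (s+1) → Fin (n+1)} (ht : Function.Injective t)
    {l : Fin (s+1)} (hl : t l = ⟨k, by omega⟩) (x : Fin s) :
    ((t (l.succAbove x) : Fin (n+1)) : ℕ) ≠ k := by
  intro h
  have heq : t (l.succAbove x) = t l := by rw [hl]; exact Fin.ext h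
  exact Fin.succAbove_ne l x (ht heq)

lemma u_strictMono {n k s : ℕ} (hk1 : 1 ≤ k) (hkn : k ≤ n) {t : Fin (s+1) → Fin (n+1)}
    (ht : StrictMono t) {l : Fin (s+1)} (hl : t l = ⟨k, by omega⟩) :
    StrictMono (fun a => del k hk1 hkn (t (l.succAbove a))) := by
  intro a b hab
  exact del_lt_del hk1 hkn (tne hkn ht.injective hl a) (tne hkn ht.injective hl b)
    (ht (Fin.strictMono_succAbove l hab))

/-- Laplace expansion of a minor of the enlarged matrix along the inserted column. -/
lemma expand0 {m n k : ℕ} (hk1 : 1 ≤ k) (hkn : k ≤ n) (A : Matrix (Fin m) (Fin n) ℝ)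
    (c : Fin m → ℝ) {s : ℕ} (r : Fin (s+1) → Fin m)
    (t : Fin (s+1) → Fin (n+1)) (ht : Function.Injective t)
    (l : Fin (s+1)) (hl : t l = ⟨k, by omega⟩) :
    ((Bmat k (by omega) A c).submatrix r t).det =
      (-1:ℝ)^(l:ℕ) * ∑ i : Fin (s+1), (-1:ℝ)^(i:ℕ) * c (r i) *
        (A.submatrix (fun a => r (i.succAbove a))
          (fun a => del k hk1 hkn (t (l.succAbove a)))).det := by
  rw [det_submatrix_expand (Bmat k (by omega) A c) r t l]
  congr 1
  refine Finset.sum_congr rfl fun i _ => ?_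
  congr 1
  · congr 1
    rw [hl]
    exact Bmat_apply_K hk1 hkn A c (r i)
  · congr 1
    funext x a
    exact Bmat_apply_ne hk1 hkn A c _ (tne hkn ht hl a)

lemma swap_lin {s q : ℕ} (G : Fin q → ℝ) (a : Fin s → ℝ) (dd : Fin s → ℝ)
    (M : Fin s → Fin q → ℝ) (N : Fin s → ℝ) :
    ∑ i : Fin s, a i * ((∑ j : Fin q, G j * M i j) + dd i) * N i
      = (∑ j : Fin q, G j * (∑ i : Fin s, a i * M i j * N i))
        + ∑ i : Fin s, a i * dd i * N i := by
  have e1 : ∀ i : Fin s, a i * ((∑ j : Fin q, G j * M i j) + dd i) * N i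
      = (∑ j : Fin q, G j * (a i * M i j * N i)) + a i * dd i * N i := by
    intro i
    have e2 : a i * ((∑ j : Fin q, G j * M i j) + dd i) * N i
        = (∑ j : Fin q, G j * M i j) * (a i * N i) + a i * dd i * N i := by ring
    rw [e2, Finset.sum_mul]
    congr 1
    exact Finset.sum_congr rfl fun j _ => by ring
  rw [Finset.sum_congr rfl (fun i _ => e1 i), Finset.sum_add_distrib]
  congr 1
  rw [Finset.sum_comm]
  exact Finset.sum_congr rfl fun j _ => (Finset.mul_sum _ _ _).symm

/-- Full expansion when the inserted column is a linear combination of the columns of `A`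
plus a remainder `d`. -/
lemma expand1 {m n k : ℕ} (hk1 : 1 ≤ k) (hkn : k ≤ n) (A : Matrix (Fin m) (Fin n) ℝ)
    (G : Fin n → ℝ) (d : Fin m → ℝ) {s : ℕ} (r : Fin (s+1) → Fin m)
    (t : Fin (s+1) → Fin (n+1)) (ht : Function.Injective t)
    (l : Fin (s+1)) (hl : t l = ⟨k, by omega⟩) :
    ((Bmat k (by omega) A (fun x => (∑ j : Fin n, G j * A x j) + d x)).submatrix r t).det =
      (∑ j : Fin n, G j * ((-1:ℝ)^(l:ℕ) *
        ((-1:ℝ)^((inspos (fun a => del k hk1 hkn (t (l.succAbove a))) j : Fin (s+1)):ℕ) *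
          (A.submatrix r
            ((inspos (fun a => del k hk1 hkn (t (l.succAbove a))) j).insertNth j
              (fun a => del k hk1 hkn (t (l.succAbove a))))).det)))
      + (-1:ℝ)^(l:ℕ) * ∑ i : Fin (s+1), (-1:ℝ)^(i:ℕ) * d (r i) *
          (A.submatrix (fun a => r (i.succAbove a))
            (fun a => del k hk1 hkn (t (l.succAbove a)))).det := by
  rw [expand0 hk1 hkn A _ r t ht l hl]
  rw [swap_lin G (fun i : Fin (s+1) => (-1:ℝ)^(i:ℕ)) (fun i => d (r i))
    (fun i j => A (r i) j)
    (fun i => (A.submatrix (fun a => r (i.succAbove a))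
      (fun a => del k hk1 hkn (t (l.succAbove a)))).det)]
  rw [mul_add, Finset.mul_sum]
  congr 1
  refine Finset.sum_congr rfl fun j _ => ?_
  rw [sum_eq_insert_det A r (fun a => del k hk1 hkn (t (l.succAbove a))) j
    (inspos (fun a => del k hk1 hkn (t (l.succAbove a))) j)]
  ring

noncomputable def gcol {m n : ℕ} (k : ℕ) (A : Matrix (Fin m) (Fin n) ℝ) (δ : ℝ) :
    Fin m → ℝ :=
  fun x => ∑ j : Fin n, sgnc k (j:ℕ) * δ ^ (oexp k (j:ℕ)) * A x j

lemma lcount {n k s : ℕ} (hk1 : 1 ≤ k) (hkn : k ≤ n) {t : Fin (s+1) → Fin (n+1)}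
    (ht : StrictMono t) {l : Fin (s+1)} (hl : t l = ⟨k, by omega⟩) :
    (l:ℕ) = (univ.filter
      (fun a : Fin s => ((del k hk1 hkn (t (l.succAbove a)) : Fin n) : ℕ) < k)).card := by
  have h1 : ∀ a : Fin s,
      (((del k hk1 hkn (t (l.succAbove a)) : Fin n)) : ℕ) < k ↔ (a:ℕ) < (l:ℕ) := by
    intro a
    rw [del_lt_iff hk1 hkn (tne hkn ht.injective hl a)]
    have hv : ((t l : Fin (n+1)) : ℕ) = k := by rw [hl]
    rw [← hv, ← Fin.lt_def, ht.lt_iff_lt, Fin.lt_def, val_succAbove]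
    split_ifs with h
    · simp [h]
    · constructor <;> omega
  rw [Finset.filter_congr (fun a _ => h1 a)]
  rw [card_filter_val_lt (by omega : (l:ℕ) ≤ s)]

lemma minor_pos_of_notMem {m n k : ℕ} (hk1 : 1 ≤ k) (hkn : k ≤ n)
    {p : ℕ} (ε : Fin p → ℝ) (A : Matrix (Fin m) (Fin n) ℝ) (hA : IsSSRp p A ε)
    (kk : Fin p) (r : Fin (kk.val+1) → Fin m) (t : Fin (kk.val+1) → Fin (n+1))
    (hr : StrictMono r) (ht : StrictMono t) (hK : ∀ l, t l ≠ ⟨k, by omega⟩)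
    (c : Fin m → ℝ) :
    0 < ε kk * ((Bmat k (by omega) A c).submatrix r t).det := by
  have hvne : ∀ l, ((t l : Fin (n+1)) : ℕ) ≠ k := fun l h => hK l (Fin.ext h)
  have hsub : (Bmat k (by omega) A c).submatrix r t
      = A.submatrix r (fun i => del k hk1 hkn (t i)) := by
    ext x a
    exact Bmat_apply_ne hk1 hkn A c _ (hvne a)
  rw [hsub]
  exact hA kk r _ hr (fun a b hab => del_lt_del hk1 hkn (hvne a) (hvne b) (ht hab))

lemma minor_pos_of_mem {m n k : ℕ} (hk1 : 1 ≤ k) (hkn : k ≤ n)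
    (ε : Fin (min m n) → ℝ) (A : Matrix (Fin m) (Fin n) ℝ) (hA : IsSSRp (min m n) A ε)
    (kk : Fin (min m n)) (r : Fin (kk.val+1) → Fin m) (t : Fin (kk.val+1) → Fin (n+1))
    (hr : StrictMono r) (ht : StrictMono t) (l : Fin (kk.val+1)) (hl : t l = ⟨k, by omega⟩) :
    ∀ᶠ δ in nhdsWithin 0 (Set.Ioi (0:ℝ)),
      0 < ε kk * ((Bmat k (by omega) A (gcol k A δ)).submatrix r t).det := by
  set u : Fin kk.val → Fin n := fun a => del k hk1 hkn (t (l.succAbove a)) with hudef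
  have hu : StrictMono u := u_strictMono hk1 hkn ht hl
  set X : Fin n → ℝ := fun j => (-1:ℝ)^(l:ℕ) *
    ((-1:ℝ)^((inspos u j : Fin (kk.val+1)):ℕ) *
      (A.submatrix r ((inspos u j).insertNth j u)).det) with hX
  set w : Fin n → ℝ := fun j => sgnc k (j:ℕ) * (ε kk * X j) with hw
  have EXP : ∀ δ : ℝ, ε kk * ((Bmat k (by omega) A (gcol k A δ)).submatrix r t).det
      = ∑ j : Fin n, w j * δ ^ (oexp k (j:ℕ)) := by
    intro δ
    have hc : gcol k A δ = fun x =>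
        (∑ j : Fin n, (fun j : Fin n => sgnc k (j:ℕ) * δ ^ (oexp k (j:ℕ))) j * A x j)
          + (fun _ : Fin m => (0:ℝ)) x := by
      funext x
      simp [gcol]
    rw [hc, expand1 hk1 hkn A _ _ r t ht.injective l hl]
    simp only [mul_zero, zero_mul, Finset.sum_const_zero, add_zero]
    rw [Finset.mul_sum]
    refine Finset.sum_congr rfl fun j _ => ?_
    rw [hw, hX]
    ring
  -- choose the dominant index
  have hset : ∃ js : Fin n, (∀ i, u i ≠ js) ∧
      ∀ j : Fin n, (∀ i, u i ≠ j) → oexp k (js:ℕ) ≤ oexp k (j:ℕ) := by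
    have hcard : (univ.image u).card < Fintype.card (Fin n) := by
      have h1 : (univ.image u).card ≤ kk.val := le_trans Finset.card_image_le (by simp)
      have h2 : kk.val < n := by
        have := kk.isLt
        omega
      simpa using lt_of_le_of_lt h1 h2
    have hne : ∃ j : Fin n, j ∉ univ.image u := by
      by_contra hc
      push_neg at hc
      have : (univ : Finset (Fin n)) ⊆ univ.image u := fun x _ => hc x
      have := Finset.card_le_card this
      simp only [Finset.card_univ] at this
      omega
    obtain ⟨j0, hj0⟩ := hne
    have hmem : j0 ∈ univ.filter (fun j : Fin n => ∀ i, u i ≠ j) := by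
      simp only [Finset.mem_filter, Finset.mem_univ, true_and]
      intro i hi
      exact hj0 (Finset.mem_image.2 ⟨i, Finset.mem_univ i, hi⟩)
    obtain ⟨js, hjs1, hjs2⟩ := Finset.exists_min_image _ (fun j : Fin n => oexp k (j:ℕ))
      ⟨j0, hmem⟩
    simp only [Finset.mem_filter, Finset.mem_univ, true_and] at hjs1
    refine ⟨js, hjs1, fun j hj => hjs2 j ?_⟩
    simp only [Finset.mem_filter, Finset.mem_univ, true_and]
    exact hj
  obtain ⟨js, hjs, hjsmin⟩ := hset
  -- positivity of the dominant coefficient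
  have hD : 0 < ε kk * (A.submatrix r ((inspos u js).insertNth js u)).det :=
    hA kk r _ hr (strictMono_insertNth hu hjs)
  have hdom : ∀ j : Fin n, oexp k (j:ℕ) < oexp k (js:ℕ) → ∃ i, u i = j := by
    intro j hj
    by_contra hcon
    push_neg at hcon
    exact absurd (hjsmin j hcon) (by omega)
  have hsign := parity_sign hk1 hkn hu.injective hjs hdom
  rw [← lcount hk1 hkn ht hl] at hsign
  have hwjs : 0 < w js := by
    have : w js = ((-1:ℝ)^(l:ℕ) * (-1:ℝ)^((inspos u js : Fin (kk.val+1)):ℕ) * sgnc k (js:ℕ))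
        * (ε kk * (A.submatrix r ((inspos u js).insertNth js u)).det) := by
      rw [hw, hX]; ring
    rw [this, hsign, one_mul]
    exact hD
  have hdom2 : ∀ j : Fin n, j ∈ (univ : Finset (Fin n)) → j ≠ js →
      oexp k (js:ℕ) < oexp k (j:ℕ) ∨ w j = 0 := by
    intro j _ hne
    by_cases hjr : ∀ i, u i ≠ j
    · left
      have hle := hjsmin j hjr
      rcases lt_or_eq_of_le hle with h | h
      · exact h
      · exact absurd (Fin.ext (oexp_inj hk1 h.symm ▸ rfl : (js:ℕ) = (j:ℕ))) hne.symm
    · right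
      push_neg at hjr
      obtain ⟨i0, hi0⟩ := hjr
      simp only [hw, hX]
      rw [insert_det_zero A r u j (inspos u j) i0 hi0]
      ring
  have := sumpos univ (fun j : Fin n => oexp k (j:ℕ)) w js (Finset.mem_univ js) hdom2 hwjs
  filter_upwards [this] with δ hδ
  rw [EXP δ]
  exact hδ

lemma part1ev {m n k : ℕ} (hk1 : 1 ≤ k) (hkn : k ≤ n)
    (ε : Fin (min m n) → ℝ) (A : Matrix (Fin m) (Fin n) ℝ) (hA : IsSSRp (min m n) A ε) :
    ∀ᶠ δ in nhdsWithin 0 (Set.Ioi (0:ℝ)),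
      IsSSRp (min m n) (Bmat k (by omega) A (gcol k A δ)) ε := by
  have main : ∀ᶠ δ in nhdsWithin 0 (Set.Ioi (0:ℝ)),
      ∀ (kk : Fin (min m n)) (r : Fin (kk.val + 1) → Fin m)
        (t : Fin (kk.val + 1) → Fin (n+1)), StrictMono r → StrictMono t →
        0 < ε kk * ((Bmat k (by omega) A (gcol k A δ)).submatrix r t).det := by
    refine eventually_all.2 fun kk => eventually_all.2 fun r => eventually_all.2 fun t => ?_
    by_cases hr : StrictMono r
    · by_cases ht : StrictMono t
      · by_cases hK : ∃ l, t l = ⟨k, by omega⟩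
        · obtain ⟨l, hl⟩ := hK
          exact (minor_pos_of_mem hk1 hkn ε A hA kk r t hr ht l hl).mono fun δ h _ _ => h
        · push_neg at hK
          exact Eventually.of_forall fun δ _ _ =>
            minor_pos_of_notMem hk1 hkn ε A hA kk r t hr ht hK _
      · exact Eventually.of_forall fun δ _ ht' => absurd ht' ht
    · exact Eventually.of_forall fun δ hr' _ => absurd hr' hr
  exact main.mono fun δ h kk r t hr ht => h kk r t hr ht

lemma n_minor_pos {m n : ℕ} (hmn : n < m) (hn : 1 ≤ n)
    (ε : Fin (min m n) → ℝ) (A : Matrix (Fin m) (Fin n) ℝ) (hA : IsSSRp (min m n) A ε)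
    (rr : Fin n → Fin m) (cc : Fin n → Fin n) (hrr : StrictMono rr) (hcc : StrictMono cc) :
    0 < ε ⟨n-1, by omega⟩ * (A.submatrix rr cc).det := by
  have hcast : n - 1 + 1 = n := by omega
  have hmono1 : StrictMono (fun i : Fin (n-1+1) => rr (Fin.cast hcast i)) :=
    fun a b hab => hrr (Fin.lt_def.mpr (Fin.lt_def.mp hab))
  have hmono2 : StrictMono (fun i : Fin (n-1+1) => cc (Fin.cast hcast i)) :=
    fun a b hab => hcc (Fin.lt_def.mpr (Fin.lt_def.mp hab))
  have h := hA ⟨n-1, by omega⟩ (fun i => rr (Fin.cast hcast i))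
    (fun i => cc (Fin.cast hcast i)) hmono1 hmono2
  have hdet : (A.submatrix (fun i => rr (Fin.cast hcast i))
      (fun i => cc (Fin.cast hcast i))).det = (A.submatrix rr cc).det := by
    have : A.submatrix (fun i => rr (Fin.cast hcast i)) (fun i => cc (Fin.cast hcast i))
        = (A.submatrix rr cc).submatrix (finCongr hcast) (finCongr hcast) := rfl
    rw [this, Matrix.det_submatrix_equiv_self]
  rwa [hdet] at h

lemma part2_full_ev {m n k : ℕ} (hk1 : 1 ≤ k) (hkn : k ≤ n) (hmn : n < m) (hn : 1 ≤ n)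
    (ε : Fin (min m n) → ℝ) (A : Matrix (Fin m) (Fin n) ℝ) (hA : IsSSRp (min m n) A ε) :
    ∀ᶠ μ in nhdsWithin 0 (Set.Ioi (0:ℝ)), ∀ r : Fin (n+1) → Fin m, StrictMono r →
      0 < ε ⟨n-1, by omega⟩ * ∑ i : Fin (n+1), (-1:ℝ)^(i:ℕ) * μ^((r i : Fin m):ℕ) *
        (A.submatrix (fun a => r (i.succAbove a))
          (fun a => del k hk1 hkn ((⟨k, by omega⟩ : Fin (n+1)).succAbove a))).det := by
  refine eventually_all.2 fun r => ?_
  by_cases hr : StrictMono r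
  · set N : Fin (n+1) → ℝ := fun i => (A.submatrix (fun a => r (i.succAbove a))
      (fun a => del k hk1 hkn ((⟨k, by omega⟩ : Fin (n+1)).succAbove a))).det with hN
    have hccmono : StrictMono (fun a : Fin n =>
        del k hk1 hkn ((⟨k, by omega⟩ : Fin (n+1)).succAbove a)) := by
      intro a b hab
      simp only [del_succAbove hk1 hkn]
      exact hab
    have hN0 : 0 < ε ⟨n-1, by omega⟩ * N 0 := by
      refine n_minor_pos hmn hn ε A hA _ _ (fun a b hab => hr ?_) hccmono
      exact Fin.strictMono_succAbove 0 hab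
    have hdom : ∀ i : Fin (n+1), i ∈ (univ : Finset (Fin (n+1))) → i ≠ 0 →
        ((r 0 : Fin m):ℕ) < ((r i : Fin m):ℕ) ∨
          ((-1:ℝ)^(i:ℕ) * (ε ⟨n-1, by omega⟩ * N i)) = 0 := by
      intro i _ hi
      left
      exact hr (Fin.pos_of_ne_zero hi)
    have hw0 : 0 < (-1:ℝ)^((0:Fin (n+1)):ℕ) * (ε ⟨n-1, by omega⟩ * N 0) := by
      simpa using hN0
    have := sumpos univ (fun i : Fin (n+1) => ((r i : Fin m):ℕ))
      (fun i => (-1:ℝ)^(i:ℕ) * (ε ⟨n-1, by omega⟩ * N i)) 0 (Finset.mem_univ _) hdom hw0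
    refine this.mono fun μ hμ _ => ?_
    have heq : ε ⟨n-1, by omega⟩ * ∑ i : Fin (n+1), (-1:ℝ)^(i:ℕ) * μ^((r i : Fin m):ℕ) * N i
        = ∑ i : Fin (n+1), ((-1:ℝ)^(i:ℕ) * (ε ⟨n-1, by omega⟩ * N i))
            * μ^((r i : Fin m):ℕ) := by
      rw [Finset.mul_sum]
      exact Finset.sum_congr rfl fun i _ => by ring
    rw [heq]
    exact hμ
  · exact Eventually.of_forall fun μ hr' => absurd hr' hr

lemma full_minor_eq {m n k : ℕ} (hk1 : 1 ≤ k) (hkn : k ≤ n) (A : Matrix (Fin m) (Fin n) ℝ)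
    (G : Fin n → ℝ) (d : Fin m → ℝ) (r : Fin (n+1) → Fin m) :
    ((Bmat k (by omega) A (fun x => (∑ j : Fin n, G j * A x j) + d x)).submatrix r id).det
      = (-1:ℝ)^k * ∑ i : Fin (n+1), (-1:ℝ)^(i:ℕ) * d (r i) *
          (A.submatrix (fun a => r (i.succAbove a))
            (fun a => del k hk1 hkn ((⟨k, by omega⟩ : Fin (n+1)).succAbove a))).det := by
  have hid : Function.Injective (id : Fin (n+1) → Fin (n+1)) := fun a b h => h
  rw [expand1 hk1 hkn A G d r id hid ⟨k, by omega⟩ rfl]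
  have hz : ∀ j : Fin n, (A.submatrix r
      ((inspos (fun a => del k hk1 hkn ((⟨k, by omega⟩ : Fin (n+1)).succAbove a)) j).insertNth
        j (fun a => del k hk1 hkn ((⟨k, by omega⟩ : Fin (n+1)).succAbove a)))).det = 0 := by
    intro j
    exact insert_det_zero A r _ j _ j (del_succAbove hk1 hkn j)
  simp only [id_eq]
  simp only [hz, mul_zero, Finset.sum_const_zero, zero_add]

lemma cond_cont {m n k : ℕ} (hk1 : 1 ≤ k) (hkn : k ≤ n) (A : Matrix (Fin m) (Fin n) ℝ)
    (b v : Fin m → ℝ) {s : ℕ} (r : Fin (s+1) → Fin m) (t : Fin (s+1) → Fin (n+1)) (C : ℝ) :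
    Continuous fun τ : ℝ =>
      C * ((Bmat k (by omega) A (fun x => b x + τ * v x)).submatrix r t).det := by
  refine continuous_const.mul (Continuous.matrix_det (continuous_matrix fun i j => ?_))
  by_cases hy : ((t j : Fin (n+1)):ℕ) = k
  · have heq : ∀ τ : ℝ, (Bmat k (by omega) A (fun x => b x + τ * v x)).submatrix r t i j
        = b (r i) + τ * v (r i) := by
      intro τ
      have hh : t j = (⟨k, by omega⟩ : Fin (n+1)) := Fin.ext hy
      have h2 := Bmat_apply_K hk1 hkn A (fun x => b x + τ * v x) (r i)
      rw [← hh] at h2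
      exact h2
    exact (continuous_const.add (continuous_id.mul continuous_const)).congr
      fun τ => (heq τ).symm
  · have heq : ∀ τ : ℝ, (Bmat k (by omega) A (fun x => b x + τ * v x)).submatrix r t i j
        = A (r i) (del k hk1 hkn (t j)) := fun τ => by
      rw [Matrix.submatrix_apply]
      exact Bmat_apply_ne hk1 hkn A _ _ hy
    exact continuous_const.congr fun τ => (heq τ).symm

noncomputable def cfull {m n : ℕ} (k : ℕ) (A : Matrix (Fin m) (Fin n) ℝ)
    (δ coef μ : ℝ) : ℝ → Fin m → ℝ :=
  fun τ x => gcol k A δ x + τ * (coef * μ^(x:ℕ))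
end SSR13

open SSR13 Filter Finset in
theorem stmt_13 (m n : ℕ) (hm : 1 ≤ m) (hn : 2 ≤ n)
    (ε : Fin (min m n) → ℝ) (hε : ∀ i, ε i = 1 ∨ ε i = -1)
    (A : Matrix (Fin m) (Fin n) ℝ) (hA : IsSSRp (min m n) A ε)
    (k : ℕ) (hk1 : 1 ≤ k) (hk2 : k ≤ n - 1) :
    (∃ c : Fin m → ℝ,
      IsSSRp (min m n)
        ((Matrix.of fun i => Fin.insertNth (⟨k, by omega⟩ : Fin (n + 1)) (c i) (A i)) :
          Matrix (Fin m) (Fin (n + 1)) ℝ) ε) ∧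
    (n < m → ∀ η : ℝ, η = 1 ∨ η = -1 →
      ∃ c : Fin m → ℝ,
        IsSSRp (min m (n + 1))
          ((Matrix.of fun i => Fin.insertNth (⟨k, by omega⟩ : Fin (n + 1)) (c i) (A i)) :
            Matrix (Fin m) (Fin (n + 1)) ℝ)
          (fun i => if h : i.val < min m n then ε ⟨i.val, h⟩ else η)) := by
  have hkn' : k ≤ n := by omega
  constructor
  · obtain ⟨δ, hδ⟩ := (part1ev (k := k) hk1 hkn' ε A hA).exists
    exact ⟨gcol k A δ, hδ⟩
  · intro hmn η hη
    have hσlt : n - 1 < min m n := by omega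
    set σ := ε ⟨n-1, hσlt⟩ with hσ
    obtain ⟨δ, hB1⟩ := (part1ev (k := k) hk1 hkn' ε A hA).exists
    obtain ⟨μ, hμ⟩ := (part2_full_ev hk1 hkn' hmn (by omega) ε A hA).exists
    set coef := η * (-1:ℝ)^k * σ with hcoef
    have hsmall : ∀ᶠ τ in nhdsWithin 0 (Set.Ioi (0:ℝ)),
        ∀ (kk : Fin (min m (n+1))) (r : Fin (kk.val+1) → Fin m)
          (t : Fin (kk.val+1) → Fin (n+1)),
          kk.val < min m n → StrictMono r → StrictMono t →
          0 < (if h : (kk:ℕ) < min m n then ε ⟨kk, h⟩ else η) *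
            ((Bmat k (by omega) A (cfull k A δ coef μ τ)).submatrix r t).det := by
      refine eventually_all.2 fun kk => eventually_all.2 fun r => eventually_all.2 fun t => ?_
      by_cases hlt : kk.val < min m n
      swap
      · exact Eventually.of_forall fun τ h => absurd h hlt
      by_cases hr : StrictMono r
      swap
      · exact Eventually.of_forall fun τ _ h => absurd h hr
      by_cases ht : StrictMono t
      swap
      · exact Eventually.of_forall fun τ _ _ h => absurd h ht
      have hcont : Continuous fun τ : ℝ =>
          (if h : (kk:ℕ) < min m n then ε ⟨kk, h⟩ else η) *
            ((Bmat k (by omega) A (cfull k A δ coef μ τ)).submatrix r t).det :=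
        cond_cont hk1 hkn' A (gcol k A δ) (fun x => coef * μ^(x:ℕ)) r t _
      have hval0 : 0 < (if h : (kk:ℕ) < min m n then ε ⟨kk, h⟩ else η) *
          ((Bmat k (by omega) A (cfull k A δ coef μ 0)).submatrix r t).det := by
        have hc0 : cfull k A δ coef μ 0 = gcol k A δ := by
          funext x
          simp [cfull]
        rw [hc0, dif_pos hlt]
        exact hB1 ⟨kk.val, hlt⟩ r t hr ht
      have hev0 : ∀ᶠ τ in nhds (0:ℝ),
          0 < (if h : (kk:ℕ) < min m n then ε ⟨kk, h⟩ else η) *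
            ((Bmat k (by omega) A (cfull k A δ coef μ τ)).submatrix r t).det := by
        have hp := (hcont.continuousAt (x := (0:ℝ))).preimage_mem_nhds
          (Ioi_mem_nhds hval0)
        filter_upwards [hp] with τ h using h
      exact (eventually_nhdsWithin_of_eventually_nhds hev0).mono fun τ h _ _ _ => h
    obtain ⟨τ, hτ1, hτmem⟩ := (hsmall.and self_mem_nhdsWithin).exists
    have hτpos : (0:ℝ) < τ := hτmem
    refine ⟨cfull k A δ coef μ τ, ?_⟩
    intro kk r t hr ht
    by_cases hlt : (kk:ℕ) < min m n
    · exact hτ1 kk r t hlt hr ht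
    · -- full-size minors
      show 0 < (if h : (kk:ℕ) < min m n then ε ⟨(kk:ℕ), h⟩ else η) *
        ((Bmat k (by omega) A (cfull k A δ coef μ τ)).submatrix r t).det
      rw [dif_neg hlt]
      have hkkval : (kk:ℕ) = n := by
        have h1 := kk.isLt
        omega
      have hcast : n + 1 = kk.val + 1 := by omega
      have hr' : StrictMono (fun i : Fin (n+1) => r (Fin.cast hcast i)) :=
        fun a b hab => hr (Fin.lt_def.mpr (Fin.lt_def.mp hab))
      have htid : (fun i : Fin (n+1) => t (Fin.cast hcast i)) = id :=
        strictMono_fin_id _ (fun a b hab => ht (Fin.lt_def.mpr (Fin.lt_def.mp hab)))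
      have hdet : ((Bmat k (by omega) A (cfull k A δ coef μ τ)).submatrix r t).det
          = ((Bmat k (by omega) A (cfull k A δ coef μ τ)).submatrix
              (fun i : Fin (n+1) => r (Fin.cast hcast i)) id).det := by
        rw [← htid]
        have hsub : (Bmat k (by omega) A (cfull k A δ coef μ τ)).submatrix
              (fun i : Fin (n+1) => r (Fin.cast hcast i))
              (fun i : Fin (n+1) => t (Fin.cast hcast i))
            = ((Bmat k (by omega) A (cfull k A δ coef μ τ)).submatrix r t).submatrix
                (finCongr hcast) (finCongr hcast) := rfl
        rw [hsub, Matrix.det_submatrix_equiv_self]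
      have hcs : cfull k A δ coef μ τ = fun x =>
          (∑ j : Fin n, (fun j : Fin n => sgnc k (j:ℕ) * δ^(oexp k (j:ℕ))) j * A x j)
            + (fun x : Fin m => τ * (coef * μ^(x:ℕ))) x := rfl
      rw [hdet, hcs, full_minor_eq hk1 hkn' A _ _ _]
      set r' : Fin (n+1) → Fin m := fun i => r (Fin.cast hcast i) with hr'def
      set N : Fin (n+1) → ℝ := fun i => (A.submatrix (fun a => r' (i.succAbove a))
        (fun a => del k hk1 hkn' ((⟨k, by omega⟩ : Fin (n+1)).succAbove a))).det with hNdef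
      have hS := hμ r' hr'
      set S := ∑ i : Fin (n+1), (-1:ℝ)^(i:ℕ) * μ^((r' i : Fin m):ℕ) * N i with hSdef
      have hsum : ∑ i : Fin (n+1), (-1:ℝ)^(i:ℕ) * (τ * (coef * μ^((r' i : Fin m):ℕ))) * N i
          = τ * coef * S := by
        rw [hSdef, Finset.mul_sum]
        exact Finset.sum_congr rfl fun i _ => by ring
      rw [hsum]
      have hη2 : η * η = 1 := by rcases hη with h | h <;> rw [h] <;> norm_num
      have hk2 : (-1:ℝ)^k * (-1:ℝ)^k = 1 := by
        rw [← pow_add]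
        exact Even.neg_one_pow ⟨k, by ring⟩
      have halg : η * ((-1:ℝ)^k * (τ * coef * S))
          = (η * η) * ((-1:ℝ)^k * (-1:ℝ)^k) * (τ * (σ * S)) := by
        rw [hcoef]
        ring
      rw [halg, hη2, hk2, one_mul, one_mul]
      exact mul_pos hτpos hS
end

section
/- Let m, n > p ≥ 1 be integers, ε = (ε_1, …, ε_p) ∈ {±1}^p, and let A be an m×n real SSR_p(ε) matrix. Then there exists a column vector c ∈ ℝ^m such that the m×(n+1) matrix [c | A], obtained by adjoining c as a new first column to the left border of A, is SSR_p(ε). -/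
open Matrix Filter Finset Topology

private lemma det_updateColumn_finset_sum {s : ℕ} (M : Matrix (Fin s) (Fin s) ℝ) (j : Fin s)
    {ι : Type*} (S : Finset ι) (v : ι → Fin s → ℝ) :
    (M.updateCol j (fun i => ∑ x ∈ S, v x i)).det
      = ∑ x ∈ S, (M.updateCol j (v x)).det := by
  classical
  induction S using Finset.induction_on with
  | empty =>
      simp only [Finset.sum_empty]
      exact Matrix.det_eq_zero_of_column_eq_zero j (fun i => by simp)
  | @insert a S ha ih =>
      have he : (fun i => ∑ x ∈ insert a S, v x i)
          = (v a + fun i => ∑ x ∈ S, v x i) := by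
        funext i; simp [Finset.sum_insert ha]
      rw [he, Matrix.det_updateCol_add, ih, Finset.sum_insert ha]

private lemma strictMono_fin_le {k n : ℕ} {β : Fin k → Fin n} (hβ : StrictMono β)
    (i : Fin k) : (i : ℕ) ≤ (β i : ℕ) := by
  induction' hi : (i : ℕ) with j ih generalizing i
  · exact Nat.zero_le _
  · have hj : j < k := by omega
    have h1 : β ⟨j, hj⟩ < β i := hβ (by simp [Fin.lt_def, hi])
    have h2 := ih ⟨j, hj⟩ rfl
    simp only [Fin.lt_def] at h1
    omega

private noncomputable def borderCol {m n : ℕ} (A : Matrix (Fin m) (Fin n) ℝ) (t : ℝ)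
    (i : Fin m) : ℝ := ∑ j : Fin n, (-1 : ℝ) ^ (j : ℕ) * t ^ (j : ℕ) * A i j

private lemma key_lemma {m n p k : ℕ} (hpn : p < n)
    (ε : Fin p → ℝ) (A : Matrix (Fin m) (Fin n) ℝ) (hA : IsSSRp p A ε)
    (kk : Fin p) (hkkv : kk.val = k)
    (r : Fin (k + 1) → Fin m) (cc : Fin (k + 1) → Fin (n + 1))
    (hr : StrictMono r) (hcc : StrictMono cc) :
    ∀ᶠ t in 𝓝[>] (0 : ℝ), 0 < ε kk *
      (((Matrix.of fun i => Fin.cons (borderCol A t i) (A i)) :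
        Matrix (Fin m) (Fin (n + 1)) ℝ).submatrix r cc).det := by
  classical
  have hA' : ∀ (r' : Fin (k + 1) → Fin m) (c' : Fin (k + 1) → Fin n),
      StrictMono r' → StrictMono c' → 0 < ε kk * (A.submatrix r' c').det := by
    subst hkkv; exact fun r' c' h1 h2 => hA kk r' c' h1 h2
  have hkp : k < p := hkkv ▸ kk.2
  have hkn : k < n := by omega
  by_cases h0 : cc 0 = 0
  · -- hard case : the minor uses the new column
    have hne : ∀ l : Fin k, cc l.succ ≠ 0 := by
      intro l hl
      have h1 : cc 0 < cc l.succ := hcc (Fin.succ_pos l)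
      rw [h0, hl] at h1
      exact lt_irrefl _ h1
    set β : Fin k → Fin n := fun l => (cc l.succ).pred (hne l) with hβdef
    have hβ : StrictMono β := by
      intro a b hab
      exact Fin.pred_lt_pred_iff.2 (hcc (Fin.succ_lt_succ_iff.2 hab))
    set S : Finset ℕ := Finset.image (fun i => ((β i : Fin n) : ℕ)) Finset.univ with hS
    have hcard : S.card ≤ k := le_trans (Finset.card_image_le) (by simp)
    obtain ⟨jw, hjw1, hjw2⟩ : ∃ j < k + 1, j ∉ S := by
      by_contra hcon
      push_neg at hcon
      have hsub : Finset.range (k + 1) ⊆ S := fun j hj => hcon j (Finset.mem_range.1 hj)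
      have h2 := Finset.card_le_card hsub
      rw [Finset.card_range] at h2; omega
    have hex : ∃ j, j ∉ S := ⟨jw, hjw2⟩
    set j0 : ℕ := Nat.find hex with hj0def
    have hj0S : j0 ∉ S := Nat.find_spec hex
    have hj0k : j0 ≤ k := le_trans (Nat.find_le hjw2) (by omega)
    have hj0n : j0 < n := by omega
    have hlt : ∀ j < j0, j ∈ S := by
      intro j hj
      by_contra hc
      exact absurd hj (not_lt.2 (Nat.find_le hc))
    -- below j0, β is the identity
    have hβi : ∀ jv : ℕ, jv < j0 → ∀ (hjk : jv < k), ((β ⟨jv, hjk⟩ : Fin n) : ℕ) = jv := by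
      intro jv
      induction jv using Nat.strong_induction_on with
      | _ jv ih =>
        intro hjv hjk
        have hv : jv ∈ S := hlt jv hjv
        simp only [hS, Finset.mem_image, Finset.mem_univ, true_and] at hv
        obtain ⟨a, ha⟩ := hv
        have hge : (jv : ℕ) ≤ ((β ⟨jv, hjk⟩ : Fin n) : ℕ) := by
          simpa using strictMono_fin_le hβ ⟨jv, hjk⟩
        rcases lt_trichotomy (a : ℕ) jv with h1 | h1 | h1
        · have h2 : ((β ⟨(a : ℕ), a.2⟩ : Fin n) : ℕ) = a := ih a h1 (lt_trans h1 hjv) a.2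
          rw [Fin.eta] at h2
          omega
        · have : a = ⟨jv, hjk⟩ := Fin.ext h1
          rw [this] at ha; exact ha
        · have h2 : β ⟨jv, hjk⟩ < β a := hβ (by simp [Fin.lt_def, h1])
          simp only [Fin.lt_def] at h2
          omega
    -- at or after j0, β is > j0
    have hβj0 : ∀ i : Fin k, j0 ≤ (i : ℕ) → j0 < ((β i : Fin n) : ℕ) := by
      intro i hi
      have hge : (i : ℕ) ≤ ((β i : Fin n) : ℕ) := strictMono_fin_le hβ i
      have hne' : ((β i : Fin n) : ℕ) ≠ j0 := by
        intro hcon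
        exact hj0S (by
          simp only [hS, Finset.mem_image, Finset.mem_univ, true_and]
          exact ⟨i, hcon⟩)
      omega
    set j0F : Fin n := ⟨j0, hj0n⟩ with hj0Fdef
    set J : Fin (k + 1) := ⟨j0, by omega⟩ with hJdef
    set π : Equiv.Perm (Fin (k + 1)) := Fin.cycleRange J with hπdef
    have hJval : (J : ℕ) = j0 := rfl
    set γ : Fin (k + 1) → Fin n := (Fin.cons j0F β : Fin (k + 1) → Fin n) ∘ π with hγdef
    -- values of γ
    have hγlow : ∀ l : Fin (k + 1), (l : ℕ) < j0 → ((γ l : Fin n) : ℕ) = (l : ℕ) := by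
      intro l hl
      have hlJ : l < J := by rw [Fin.lt_def, hJval]; omega
      have hπl : π l = Fin.succ ⟨(l : ℕ), by omega⟩ := by
        apply Fin.ext
        have := Fin.coe_cycleRange_of_lt hlJ
        simp only [Fin.val_succ]
        rw [hπdef]
        omega
      rw [hγdef]
      simp only [Function.comp_apply, hπl, Fin.cons_succ]
      exact hβi (l : ℕ) hl (by omega)
    have hγJ : γ J = j0F := by
      rw [hγdef]
      simp only [Function.comp_apply, hπdef, Fin.cycleRange_self, Fin.cons_zero]
    have hγtail : ∀ (l : Fin (k + 1)) (h0' : l ≠ 0), J < l → γ l = β (l.pred h0') := by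
      intro l h0' hl
      have hπl : π l = l := Fin.cycleRange_of_gt hl
      rw [hγdef]
      simp only [Function.comp_apply, hπl]
      conv_lhs => rw [← Fin.succ_pred l h0', Fin.cons_succ]
    have hγ : StrictMono γ := by
      intro a b hab
      have hab' : (a : ℕ) < (b : ℕ) := hab
      have hb2 := b.2
      rcases lt_trichotomy (b : ℕ) j0 with hb | hb | hb
      · -- both below j0
        have ha : (a : ℕ) < j0 := by omega
        have h1 := hγlow a ha
        have h2 := hγlow b hb
        simp only [Fin.lt_def]; omega
      · -- b = J
        have hbJ : b = J := Fin.ext (by rw [hJval]; exact hb)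
        have ha : (a : ℕ) < j0 := by omega
        have h1 := hγlow a ha
        rw [hbJ, hγJ]
        simp only [Fin.lt_def, hj0Fdef]; omega
      · -- b > J
        have hb0 : b ≠ 0 := by
          intro hcon; rw [hcon] at hb; simp at hb
        have hbJ : J < b := by rw [Fin.lt_def, hJval]; omega
        have h2 := hγtail b hb0 hbJ
        have h2v : j0 < ((γ b : Fin n) : ℕ) := by
          rw [h2]
          exact hβj0 _ (by rw [Fin.coe_pred]; omega)
        rcases lt_trichotomy (a : ℕ) j0 with ha | ha | ha
        · have h1 := hγlow a ha
          simp only [Fin.lt_def]; omega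
        · have haJ : a = J := Fin.ext (by rw [hJdef]; exact ha)
          rw [haJ, hγJ]
          simp only [Fin.lt_def, hj0Fdef]; omega
        · have ha0 : a ≠ 0 := by
            intro hcon; rw [hcon] at ha; simp at ha
          have haJ : J < a := by rw [Fin.lt_def, hJval]; omega
          rw [h2, hγtail a ha0 haJ]
          exact hβ (by simp only [Fin.lt_def, Fin.coe_pred]; omega)
    -- the signed minor at j0 is positive
    have hAγ : 0 < ε kk * (A.submatrix r γ).det := hA' r γ hr hγ
    have hsubm : A.submatrix r γ
        = (A.submatrix r (Fin.cons j0F β)).submatrix id ⇑π := rfl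
    have hsign0 : (Equiv.Perm.sign π : ℤ) = (-1 : ℤ) ^ j0 := by
      rw [hπdef, Fin.sign_cycleRange, hJval]
      simp [Units.val_pow_eq_pow_val]
    have hsign : ((Equiv.Perm.sign π : ℤ) : ℝ) = (-1 : ℝ) ^ j0 := by
      rw [hsign0]; push_cast; ring
    have hdetγ : (A.submatrix r γ).det
        = (-1 : ℝ) ^ j0 * (A.submatrix r (Fin.cons j0F β)).det := by
      rw [hsubm, Matrix.det_permute' π, hsign]
    -- the expansion of the bordered minor
    have hexp : ∀ t : ℝ, (((Matrix.of fun i => Fin.cons (borderCol A t i) (A i)) :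
        Matrix (Fin m) (Fin (n + 1)) ℝ).submatrix r cc).det
        = ∑ j : Fin n, (-1 : ℝ) ^ (j : ℕ) * t ^ (j : ℕ)
            * (A.submatrix r (Fin.cons j β)).det := by
      intro t
      have h1 : (((Matrix.of fun i => Fin.cons (borderCol A t i) (A i)) :
          Matrix (Fin m) (Fin (n + 1)) ℝ).submatrix r cc)
          = (A.submatrix r (Fin.cons j0F β)).updateCol 0
              (fun i => ∑ j : Fin n,
                ((-1 : ℝ) ^ (j : ℕ) * t ^ (j : ℕ)) • (fun i' => A (r i') j) i) := by
        ext i l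
        induction l using Fin.cases with
        | zero =>
            simp only [Matrix.submatrix_apply, Matrix.of_apply, h0, Fin.cons_zero,
              Matrix.updateCol_self]
            simp [borderCol, smul_eq_mul]
        | succ l' =>
            rw [Matrix.updateCol_ne (Fin.succ_ne_zero l')]
            simp only [Matrix.submatrix_apply, Matrix.of_apply]
            conv_lhs => rw [← Fin.succ_pred (cc l'.succ) (hne l'), Fin.cons_succ]
            rw [Fin.cons_succ]
      rw [h1, det_updateColumn_finset_sum]
      refine Finset.sum_congr rfl (fun j _ => ?_)
      have e1 : (fun i => ((-1 : ℝ) ^ (j : ℕ) * t ^ (j : ℕ)) • (fun i' => A (r i') j) i)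
          = ((-1 : ℝ) ^ (j : ℕ) * t ^ (j : ℕ)) • (fun i' => A (r i') j) := rfl
      rw [e1, Matrix.det_updateCol_smul]
      congr 2
      ext i l
      induction l using Fin.cases with
      | zero => simp [Matrix.updateCol_self]
      | succ l' => rw [Matrix.updateCol_ne (Fin.succ_ne_zero l')]; simp
    -- the coefficients
    set cf : ℕ → ℝ := fun j =>
      if h : j < n then (-1 : ℝ) ^ j * (ε kk * (A.submatrix r (Fin.cons (⟨j, h⟩ : Fin n) β)).det)
      else 0 with hcfdef
    have hsum : ∀ t : ℝ, ε kk * (((Matrix.of fun i => Fin.cons (borderCol A t i) (A i)) :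
        Matrix (Fin m) (Fin (n + 1)) ℝ).submatrix r cc).det
        = ∑ j ∈ Finset.range n, cf j * t ^ j := by
      intro t
      rw [hexp t, Finset.mul_sum, ← Fin.sum_univ_eq_sum_range (fun j => cf j * t ^ j) n]
      congr 1
      funext j
      rw [hcfdef]
      simp only [dif_pos j.2, Fin.eta]
      ring
    have hcf0 : ∀ j < j0, cf j = 0 := by
      intro j hj
      have hjn : j < n := by omega
      have hjS : j ∈ S := hlt j hj
      simp only [hS, Finset.mem_image, Finset.mem_univ, true_and] at hjS
      obtain ⟨a, ha⟩ := hjS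
      have hdet0 : (A.submatrix r (Fin.cons (⟨j, hjn⟩ : Fin n) β)).det = 0 := by
        apply Matrix.det_zero_of_column_eq (Fin.succ_ne_zero a).symm
        intro i
        simp only [Matrix.submatrix_apply, Fin.cons_zero, Fin.cons_succ]
        congr 1
        exact (Fin.ext ha).symm
      rw [hcfdef]
      simp [dif_pos hjn, hdet0]
    have hcfj0 : 0 < cf j0 := by
      rw [hcfdef]
      simp only [dif_pos hj0n]
      have : (-1 : ℝ) ^ j0 * (ε kk * (A.submatrix r (Fin.cons (⟨j0, hj0n⟩ : Fin n) β)).det)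
          = ε kk * ((-1 : ℝ) ^ j0 * (A.submatrix r (Fin.cons j0F β)).det) := by
        rw [hj0Fdef]; ring
      rw [this, ← hdetγ]
      exact hAγ
    -- the factored polynomial
    set g : ℝ → ℝ := fun t => ∑ j ∈ Finset.range (n - j0), cf (j0 + j) * t ^ j with hgdef
    have hfact : ∀ t : ℝ, ∑ j ∈ Finset.range n, cf j * t ^ j = t ^ j0 * g t := by
      intro t
      calc ∑ j ∈ Finset.range n, cf j * t ^ j
          = ∑ j ∈ Finset.Ico 0 j0, cf j * t ^ j + ∑ j ∈ Finset.Ico j0 n, cf j * t ^ j := by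
            rw [Finset.range_eq_Ico,
              Finset.sum_Ico_consecutive _ (Nat.zero_le j0) (le_of_lt hj0n)]
        _ = ∑ j ∈ Finset.Ico j0 n, cf j * t ^ j := by
            rw [Finset.sum_eq_zero
              (fun j hj => by rw [hcf0 j (Finset.mem_Ico.1 hj).2, zero_mul]), zero_add]
        _ = ∑ j ∈ Finset.range (n - j0), cf (j0 + j) * t ^ (j0 + j) :=
            Finset.sum_Ico_eq_sum_range _ _ _
        _ = t ^ j0 * g t := by
            show _ = t ^ j0 * ∑ j ∈ Finset.range (n - j0), cf (j0 + j) * t ^ j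
            rw [Finset.mul_sum]
            exact Finset.sum_congr rfl (fun j _ => by rw [pow_add]; ring)
    have hgcont : Continuous g :=
      continuous_finset_sum _ fun j _ => (continuous_const.mul (continuous_pow j))
    have hg0 : g 0 = cf j0 := by
      show (∑ j ∈ Finset.range (n - j0), cf (j0 + j) * (0 : ℝ) ^ j) = cf j0
      rw [Finset.sum_eq_single_of_mem 0 (Finset.mem_range.2 (by omega))]
      · simp
      · intro j _ hjne
        simp [zero_pow hjne]
    have hgpos : ∀ᶠ t in 𝓝[>] (0 : ℝ), 0 < g t := by
      apply Filter.Eventually.filter_mono nhdsWithin_le_nhds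
      have hc : ContinuousAt g 0 := hgcont.continuousAt
      have hmem : {x : ℝ | 0 < x} ∈ 𝓝 (g 0) := by
        rw [hg0]
        exact Ioi_mem_nhds hcfj0
      exact hc hmem
    have htpos : ∀ᶠ t in 𝓝[>] (0 : ℝ), 0 < t := by
      filter_upwards [self_mem_nhdsWithin] with t ht
      exact ht
    filter_upwards [hgpos, htpos] with t hg ht
    rw [hsum t, hfact t]
    exact mul_pos (pow_pos ht j0) hg
  · -- easy case : the minor avoids the new column
    have hne : ∀ l, cc l ≠ 0 := by
      intro l hl
      have h1 : cc 0 ≤ cc l := hcc.monotone (Fin.zero_le l)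
      rw [hl] at h1
      exact h0 (le_antisymm h1 (Fin.zero_le _))
    have heq : ∀ t : ℝ, (((Matrix.of fun i => Fin.cons (borderCol A t i) (A i)) :
        Matrix (Fin m) (Fin (n + 1)) ℝ).submatrix r cc)
        = A.submatrix r (fun l => (cc l).pred (hne l)) := by
      intro t
      ext i l
      simp only [Matrix.submatrix_apply, Matrix.of_apply]
      conv_lhs => rw [← Fin.succ_pred (cc l) (hne l)]
      rw [Fin.cons_succ]
    filter_upwards with t
    rw [heq t]
    exact hA' r _ hr (Fin.strictMono_pred_comp hne hcc)

theorem stmt_15 (m n p : ℕ) (hp : 1 ≤ p) (hpm : p < m) (hpn : p < n)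
    (ε : Fin p → ℝ) (hε : ∀ i, ε i = 1 ∨ ε i = -1)
    (A : Matrix (Fin m) (Fin n) ℝ) (hA : IsSSRp p A ε) :
    ∃ c : Fin m → ℝ,
      IsSSRp p ((Matrix.of fun i => Fin.cons (c i) (A i)) : Matrix (Fin m) (Fin (n + 1)) ℝ) ε := by
  classical
  have hfin : ∀ᶠ t in 𝓝[>] (0 : ℝ), ∀ (kk : Fin p) (r : Fin (kk.val + 1) → Fin m)
      (cc : Fin (kk.val + 1) → Fin (n + 1)), StrictMono r → StrictMono cc →
      0 < ε kk * (((Matrix.of fun i => Fin.cons (borderCol A t i) (A i)) :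
        Matrix (Fin m) (Fin (n + 1)) ℝ).submatrix r cc).det := by
    rw [Filter.eventually_all]
    intro kk
    rw [Filter.eventually_all]
    intro r
    rw [Filter.eventually_all]
    intro cc
    rw [Filter.eventually_imp_distrib_left]
    intro hr
    rw [Filter.eventually_imp_distrib_left]
    intro hcc
    exact key_lemma hpn ε A hA kk rfl r cc hr hcc
  obtain ⟨t, ht⟩ := hfin.exists
  exact ⟨borderCol A t, fun kk r cc hr hcc => ht kk r cc hr hcc⟩
end

section
/- For all integers m, n ≥ 1 and every sign pattern ε = (ε_1, …, ε_{min{m,n}}) ∈ {±1}^{min{m,n}}, there exists an m×n real matrix that is SSR(ε). -/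
open Finset Matrix Equiv

theorem sum_mul_zpow_pos_of_dominant {ι : Type*} [DecidableEq ι] {s : Finset ι} {i₀ : ι}
    (hi₀ : i₀ ∈ s) {a : ι → ℝ} {E : ι → ℤ} {x : ℝ} (hx : (#s : ℝ) ≤ x) (ha₀ : a i₀ = 1)
    (ha : ∀ i ∈ s, |a i| ≤ 1) (hE : ∀ i ∈ s, i ≠ i₀ → E i < E i₀) :
    0 < ∑ i ∈ s, a i * x ^ E i := by
  have hcard : (#(s.erase i₀) : ℝ) + 1 = #s := by exact_mod_cast card_erase_add_one hi₀
  have hx₁ : 1 ≤ x := by linarith [(#(s.erase i₀)).cast_nonneg (α := ℝ)]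
  have hx₀ : 0 < x := by linarith
  set y := x ^ (E i₀ - 1)
  have hy : 0 < y := zpow_pos hx₀ _
  have hrest : -(#(s.erase i₀) * y) ≤ ∑ i ∈ s.erase i₀, a i * x ^ E i := by
    rw [← nsmul_eq_mul, ← sum_const, ← sum_neg_distrib]
    refine sum_le_sum fun i hi => neg_le_of_abs_le ?_
    obtain ⟨hne, his⟩ := mem_erase.1 hi
    rw [abs_mul, abs_of_pos (zpow_pos hx₀ _)]
    calc |a i| * x ^ E i ≤ 1 * y :=
          mul_le_mul (ha i his) (zpow_le_zpow_right₀ hx₁ (Int.le_sub_one_of_lt (hE i his hne)))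
            (zpow_nonneg hx₀.le _) zero_le_one
      _ = y := one_mul y
  have htop : x ^ E i₀ = x * y := by rw [← zpow_one_add₀ hx₀.ne']; ring_nf
  rw [← add_sum_erase s _ hi₀, ha₀, one_mul, htop]
  nlinarith

theorem Matrix.det_mul_eq_sum_injective {k L R : Type*} [Fintype k] [DecidableEq k] [Fintype L]
    [DecidableEq L] [CommRing R] (A : Matrix k L R) (B : Matrix L k R) :
    (A * B).det = ∑ g : k → L with Function.Injective g,
      ∑ σ : Perm k, ((Perm.sign σ : ℤ) : R) * ∏ i, A (σ i) (g i) * B (g i) i := by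
  calc (A * B).det
      = ∑ g : k → L, ∑ σ : Perm k, ((Perm.sign σ : ℤ) : R) * ∏ i, A (σ i) (g i) * B (g i) i := by
        simp only [det_apply', mul_apply, prod_univ_sum, mul_sum, Fintype.piFinset_univ]
        rw [Finset.sum_comm]
    _ = _ := by
        refine (sum_subset (filter_subset _ _) fun g _ hg => ?_).symm
        obtain ⟨i, j, hgij, hij⟩ := Function.not_injective_iff.mp (by simpa using hg)
        have hcol : (A.submatrix id g).det = 0 := det_zero_of_column_eq hij fun a => by simp [hgij]
        simpa only [det_apply', prod_mul_distrib, sum_mul, mul_assoc, submatrix_apply, id,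
          zero_mul] using congrArg (· * ∏ i, B (g i) i) hcol

theorem Finset.sum_range_card_le_sum (s : Finset ℕ) : ∑ i ∈ range #s, i ≤ ∑ x ∈ s, x := by
  induction s using Finset.induction_on_max with
  | empty => simp
  | insert a s hlt ih =>
    have ha : a ∉ s := fun h => lt_irrefl a (hlt a h)
    have hcard : #s ≤ a := by
      simpa using card_le_card (fun x hx => mem_range.2 (hlt x hx) : s ⊆ range a)
    rw [card_insert_of_notMem ha, sum_range_succ, sum_insert ha]
    omega

theorem Finset.sum_range_card_lt_sum {s : Finset ℕ} (h : ∃ x ∈ s, #s ≤ x) :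
    ∑ i ∈ range #s, i < ∑ x ∈ s, x := by
  obtain ⟨x, hx, hsx⟩ := h
  have hmax : x ≤ s.max' ⟨x, hx⟩ := le_max' s x hx
  have hle := sum_range_card_le_sum (s.erase (s.max' ⟨x, hx⟩))
  have hcard := card_erase_add_one (max'_mem s ⟨x, hx⟩)
  rw [← add_sum_erase s _ (max'_mem s ⟨x, hx⟩), ← hcard, sum_range_succ]
  omega

theorem Fin.sum_val_lt_sum_of_injective {k : ℕ} {g : Fin k → ℕ} (hg : Function.Injective g)
    (h : ∃ i, k ≤ g i) : ∑ i : Fin k, (i : ℕ) < ∑ i, g i := by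
  have hcard : #(univ.image g) = k := by simp [card_image_of_injective _ hg]
  have := sum_range_card_lt_sum (s := univ.image g) <| by
    obtain ⟨i, hi⟩ := h
    exact ⟨g i, by simp, by rw [hcard]; exact hi⟩
  rwa [hcard, sum_image fun i _ j _ hij => hg hij, ← Fin.sum_univ_eq_sum_range] at this

theorem StrictMono.sum_mul_perm_le {k : ℕ} {a : Fin k → ℕ} (ha : StrictMono a)
    (τ : Perm (Fin k)) : ∑ i, a i * τ i ≤ ∑ i, a i * i :=
  (ha.monotone.monovary Fin.val_strictMono.monotone).sum_mul_comp_perm_le_sum_mul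

theorem StrictMono.sum_mul_perm_lt {k : ℕ} {a : Fin k → ℕ} (ha : StrictMono a)
    {τ : Perm (Fin k)} (hτ : τ ≠ 1) : ∑ i, a i * τ i < ∑ i, a i * i := by
  rw [(ha.monotone.monovary Fin.val_strictMono.monotone).sum_mul_comp_perm_lt_sum_mul_iff]
  refine fun hmv => hτ (Equiv.ext fun i => congrFun (StrictMono.eq_id fun i j hij => ?_) i)
  by_contra! hji
  exact (ha hij).not_ge (hmv (lt_of_le_of_ne hji ((Fin.val_injective.comp τ.injective).ne hij.ne')))

section IndexPairing

variable {k : ℕ} (r c : Fin k → ℕ)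

def indexPairing (σ : Perm (Fin k)) (g : Fin k → ℕ) : ℕ := ∑ i, (r (σ i) + c i) * g i

variable {r c}

theorem indexPairing_perm_lt (hr : StrictMono r) (hc : StrictMono c) {σ π : Perm (Fin k)}
    (hne : (σ, π) ≠ (1, 1)) :
    indexPairing r c σ (fun i => π i) < indexPairing r c 1 Fin.val := by
  have hrow : ∑ i, r (σ i) * π i = ∑ j, r j * (π * σ⁻¹) j := by
    rw [← Equiv.sum_comp σ fun j => r j * (π * σ⁻¹) j]
    simp [Perm.mul_apply]
  have hrow_le := hr.sum_mul_perm_le (π * σ⁻¹)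
  have hcol_le := hc.sum_mul_perm_le π
  simp only [indexPairing, add_mul, sum_add_distrib, Perm.one_apply, hrow]
  by_cases hπ : π = 1
  · have hσ : π * σ⁻¹ ≠ 1 := by
      subst hπ; simpa [inv_eq_one] using fun h => hne (by simp [h])
    have := hr.sum_mul_perm_lt hσ
    omega
  · have := hc.sum_mul_perm_lt hπ
    omega

theorem indexPairing_le {m n p : ℕ} (hrm : ∀ i, r i < m) (hcn : ∀ i, c i < n) (hk : k ≤ p)
    (σ : Perm (Fin k)) {g : Fin k → ℕ} (hgp : ∀ i, g i < p) :
    indexPairing r c σ g ≤ (m + n) * p ^ 2 := by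
  calc indexPairing r c σ g ≤ ∑ _i : Fin k, (m + n) * p :=
        sum_le_sum fun i _ => Nat.mul_le_mul (by linarith [hrm (σ i), hcn i]) (hgp i).le
    _ = k * ((m + n) * p) := by simp
    _ ≤ p * ((m + n) * p) := Nat.mul_le_mul_right _ hk
    _ = (m + n) * p ^ 2 := by ring

theorem indexPairing_sub_mul_sum_lt {m n p : ℕ} {M : ℤ} (hM : ((m + n) * p ^ 2 : ℕ) < M)
    (hk : k ≤ p) (hr : StrictMono r) (hc : StrictMono c) (hrm : ∀ i, r i < m)
    (hcn : ∀ i, c i < n) {σ : Perm (Fin k)} {g : Fin k → ℕ} (hg : Function.Injective g)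
    (hgp : ∀ i, g i < p) (hne : (σ, g) ≠ (1, Fin.val)) :
    (indexPairing r c σ g : ℤ) - M * ∑ i, g i
      < (indexPairing r c 1 Fin.val : ℤ) - M * ∑ i : Fin k, (i : ℕ) := by
  by_cases hgk : ∀ i, g i < k
  · let π : Perm (Fin k) := Equiv.ofBijective (fun i => ⟨g i, hgk i⟩)
      (Finite.injective_iff_bijective.mp fun i j h => hg (Fin.mk.inj_iff.mp h))
    have hπ : (fun i => (π i : ℕ)) = g := rfl
    have hsum : ∑ i, g i = ∑ i : Fin k, (i : ℕ) := by
      rw [← hπ]; exact Equiv.sum_comp π Fin.val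
    have hlt := indexPairing_perm_lt hr hc (σ := σ) (π := π) fun h => hne <| by
      simp only [Prod.mk.injEq] at h ⊢
      exact ⟨h.1, by rw [← hπ, h.2]; rfl⟩
    rw [hπ] at hlt
    rw [hsum]
    omega
  · push Not at hgk
    have hP : (indexPairing r c σ g : ℤ) < M :=
      lt_of_le_of_lt (by exact_mod_cast indexPairing_le hrm hcn hk σ hgp) hM
    have hS : M * ((∑ i : Fin k, (i : ℕ) : ℕ) + 1 : ℤ) ≤ M * (∑ i, g i : ℕ) :=
      mul_le_mul_of_nonneg_left (by exact_mod_cast Fin.sum_val_lt_sum_of_injective hg hgk)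
        (by linarith [Int.natCast_nonneg ((m + n) * p ^ 2)])
    have hP₁ : (0 : ℤ) ≤ indexPairing r c 1 Fin.val := by positivity
    linarith

end IndexPairing

theorem Finset.prod_zpow_eq_zpow_sum₀ {ι G₀ : Type*} [CommGroupWithZero G₀] {a : G₀}
    (ha : a ≠ 0) (s : Finset ι) (f : ι → ℤ) : ∏ i ∈ s, a ^ f i = a ^ ∑ i ∈ s, f i := by
  induction s using Finset.cons_induction with
  | empty => simp
  | cons i s hi ih => rw [prod_cons, sum_cons, zpow_add₀ ha, ih]

theorem abs_intCast_units (u : ℤˣ) : |((u : ℤ) : ℝ)| = 1 := by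
  rcases Int.units_eq_one_or u with rfl | rfl <;> simp

noncomputable def signedHankel (m n p : ℕ) (d : ℕ → ℤˣ) (x : ℝ) (M : ℤ) :
    Matrix (Fin m) (Fin n) ℝ :=
  of fun i j => ∑ ℓ : Fin p, ((d ℓ : ℤ) : ℝ) * x ^ (((i : ℤ) + j - M) * ℓ)

section SignedHankel

variable {m n p k : ℕ} (d : ℕ → ℤˣ) {x : ℝ} {M : ℤ} {r : Fin k → Fin m} {c : Fin k → Fin n}

theorem signedHankel_submatrix_eq_mul (hx : x ≠ 0) :
    (signedHankel m n p d x M).submatrix r c =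
      (of fun a (ℓ : Fin p) => ((d ℓ : ℤ) : ℝ) * x ^ (((r a : ℤ) - M) * ℓ)) *
        of fun (ℓ : Fin p) b => x ^ ((c b : ℤ) * ℓ) := by
  ext a b
  simp only [signedHankel, submatrix_apply, of_apply, mul_apply, mul_assoc, ← zpow_add₀ hx]
  ring_nf

theorem det_submatrix_signedHankel (hx : x ≠ 0) :
    ((signedHankel m n p d x M).submatrix r c).det =
      ∑ q ∈ univ.filter (fun g : Fin k → Fin p => Function.Injective g) ×ˢ univ,
        (((Perm.sign q.2 * ∏ i, d (q.1 i) : ℤˣ) : ℤ) : ℝ) *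
          x ^ ((indexPairing (fun i => r i) (fun i => c i) q.2 (fun i => q.1 i) : ℤ)
            - M * ∑ i, (q.1 i : ℕ)) := by
  rw [signedHankel_submatrix_eq_mul d hx, det_mul_eq_sum_injective, sum_product]
  refine sum_congr rfl fun g _ => sum_congr rfl fun σ _ => ?_
  simp only [of_apply, prod_mul_distrib, Units.val_mul, Units.coe_prod, Int.cast_mul,
    Int.cast_prod, prod_zpow_eq_zpow_sum₀ hx, mul_assoc, ← zpow_add₀ hx, indexPairing]
  push_cast
  rw [mul_sum, ← sum_sub_distrib]
  congr 3
  exact sum_congr rfl fun i _ => by ring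

theorem pos_mul_det_submatrix_signedHankel (hM : ((m + n) * p ^ 2 : ℕ) < M) (hk : k ≤ p)
    (hx : ((p ^ k * k.factorial : ℕ) : ℝ) ≤ x) (hr : StrictMono r) (hc : StrictMono c) :
    0 < (((∏ ℓ ∈ range k, d ℓ : ℤˣ) : ℤ) : ℝ) * ((signedHankel m n p d x M).submatrix r c).det := by
  have hx₀ : x ≠ 0 := by
    have : 0 < p ^ k * k.factorial := Nat.pos_of_ne_zero (by simp [Nat.factorial_ne_zero]; omega)
    have : (1 : ℝ) ≤ x := le_trans (by exact_mod_cast this) hx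
    positivity
  set s := ∏ ℓ ∈ range k, d ℓ
  set ι : Fin k → Fin p := Fin.castLE hk
  rw [det_submatrix_signedHankel d hx₀, mul_sum]
  simp_rw [← mul_assoc]
  refine sum_mul_zpow_pos_of_dominant (i₀ := (ι, 1)) ?_ ?_ ?_
    (fun q _ => by rw [abs_mul, abs_intCast_units, abs_intCast_units, one_mul]) ?_
  · simpa [ι] using Fin.castLE_injective hk
  · refine le_trans ?_ hx
    rw [card_product, card_univ, Fintype.card_perm, Fintype.card_fin]
    exact_mod_cast Nat.mul_le_mul_right _ ((card_filter_le _ _).trans (by simp))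
  · have : ∏ i : Fin k, d (ι i) = s := Fin.prod_univ_eq_prod_range d k
    rw [map_one, one_mul, this, ← Int.cast_mul, ← Units.val_mul, Int.units_mul_self,
      Units.val_one, Int.cast_one]
  · rintro ⟨g, σ⟩ hq hne
    have hg : Function.Injective g := by simpa using (mem_product.1 hq).1
    refine indexPairing_sub_mul_sum_lt hM hk (Fin.val_strictMono.comp hr)
      (Fin.val_strictMono.comp hc) (fun i => (r i).isLt) (fun i => (c i).isLt)
      (Fin.val_injective.comp hg) (fun i => (g i).isLt) fun h => hne ?_
    simp only [Prod.mk.injEq] at h ⊢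
    exact ⟨funext fun i => Fin.ext (congrFun h.2 i), h.1⟩

end SignedHankel

theorem exists_matrix_minors_sign (m n p : ℕ) (s : ℕ → ℤˣ) (hs : s 0 = 1) :
    ∃ A : Matrix (Fin m) (Fin n) ℝ, ∀ k ≤ p, ∀ (r : Fin k → Fin m) (c : Fin k → Fin n),
      StrictMono r → StrictMono c → 0 < ((s k : ℤ) : ℝ) * (A.submatrix r c).det := by
  refine ⟨signedHankel m n p (fun ℓ => s (ℓ + 1) / s ℓ) ((p + 1) ^ p * p.factorial : ℕ)
    ((m + n) * p ^ 2 + 1 : ℕ), fun k hk r c hr hc => ?_⟩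
  have hsign : ∏ ℓ ∈ range k, s (ℓ + 1) / s ℓ = s k := by rw [prod_range_div, hs, div_one]
  have hx : p ^ k * k.factorial ≤ (p + 1) ^ p * p.factorial :=
    Nat.mul_le_mul ((Nat.pow_le_pow_left p.le_succ k).trans (Nat.pow_le_pow_right p.succ_pos hk))
      (Nat.factorial_le hk)
  rw [← hsign]
  exact pos_mul_det_submatrix_signedHankel _ (by push_cast; omega) hk (by exact_mod_cast hx) hr hc

theorem stmt_17_general (m n : ℕ)
    (ε : Fin (min m n) → ℝ) (hε : ∀ i, ε i = 1 ∨ ε i = -1) :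
    ∃ A : Matrix (Fin m) (Fin n) ℝ, IsSSRp (min m n) A ε := by
  have hunit : ∀ i, ∃ u : ℤˣ, ((u : ℤ) : ℝ) = ε i := fun i =>
    (hε i).elim (fun h => ⟨1, by simp [h]⟩) fun h => ⟨-1, by simp [h]⟩
  choose u hu using hunit
  obtain ⟨A, hA⟩ := exists_matrix_minors_sign m n (min m n)
    (fun t => if h : 0 < t ∧ t ≤ min m n then u ⟨t - 1, by omega⟩ else 1) (by simp)
  refine ⟨A, fun kk r c hr hc => ?_⟩
  simpa [hu, lt_min_iff.mp kk.isLt] using hA (kk + 1) kk.isLt r c hr hc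

theorem stmt_17 (m n : ℕ) (hm : 1 ≤ m) (hn : 1 ≤ n)
    (ε : Fin (min m n) → ℝ) (hε : ∀ i, ε i = 1 ∨ ε i = -1) :
    ∃ A : Matrix (Fin m) (Fin n) ℝ, IsSSRp (min m n) A ε :=
  stmt_17_general m n ε hε
end

section
/- For all integers m, n ≥ p ≥ 1 and every sign pattern ε = (ε_1, …, ε_p) ∈ {±1}^p, there exists an m×n real matrix that is SSR_p(ε). -/
open Matrix Finset Filter Function

/-! Auxiliary sign sequence -/

noncomputable def Ff (p : ℕ) (ε : Fin p → ℝ) : ℕ → ℝ :=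
  fun j => if h : 1 ≤ p ∧ j ≠ 0 then ε ⟨min (j-1) (p-1), by omega⟩ else 1

lemma Ff_pm (p : ℕ) (ε : Fin p → ℝ) (hε : ∀ i, ε i = 1 ∨ ε i = -1) (j : ℕ) :
    Ff p ε j = 1 ∨ Ff p ε j = -1 := by
  unfold Ff; split
  · exact hε _
  · exact Or.inl rfl

lemma Ff_sq (p : ℕ) (ε : Fin p → ℝ) (hε : ∀ i, ε i = 1 ∨ ε i = -1) (j : ℕ) :
    Ff p ε j * Ff p ε j = 1 := by
  rcases Ff_pm p ε hε j with h | h <;> rw [h] <;> norm_num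

lemma Ff_prod (p : ℕ) (ε : Fin p → ℝ) (hε : ∀ i, ε i = 1 ∨ ε i = -1) (k : ℕ) :
    ∏ j ∈ range k, (Ff p ε (j+1) * Ff p ε j) = Ff p ε k := by
  induction k with
  | zero => simp [Ff]
  | succ k ih =>
    rw [prod_range_succ, ih]
    have h2 := Ff_sq p ε hε k
    calc Ff p ε k * (Ff p ε (k+1) * Ff p ε k) = Ff p ε (k+1) * (Ff p ε k * Ff p ε k) := by ring
    _ = Ff p ε (k+1) := by rw [h2, mul_one]

noncomputable def sf (m p : ℕ) (ε : Fin p → ℝ) : ℕ → ℝ :=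
  fun l => Ff p ε (m - l) * Ff p ε (m - l - 1)

lemma sf_prod (m p : ℕ) (ε : Fin p → ℝ) (hε : ∀ i, ε i = 1 ∨ ε i = -1) (k : ℕ) (hk : k ≤ m) :
    ∏ j ∈ range k, sf m p ε (m - k + j) = Ff p ε k := by
  have h1 : ∀ j ∈ range k, sf m p ε (m - k + j)
      = (fun j => Ff p ε (j+1) * Ff p ε j) (k - 1 - j) := by
    intro j hj
    have hj' : j < k := mem_range.mp hj
    unfold sf
    congr 2 <;> omega
  rw [prod_congr rfl h1, prod_range_reflect (fun j => Ff p ε (j+1) * Ff p ε j) k,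
    Ff_prod p ε hε k]

/-! value map -/

noncomputable def xv {q : ℕ} (a : Fin q) : ℝ := ((a : ℕ) : ℝ) + 1

lemma xv_pos {q : ℕ} (a : Fin q) : 0 < xv a := by unfold xv; positivity

lemma xv_strictMono {q k : ℕ} {r : Fin k → Fin q} (hr : StrictMono r) :
    StrictMono (fun i => xv (r i)) := by
  intro i j hij
  have h1 : (r i : ℕ) < (r j : ℕ) := hr hij
  have h2 : ((r i : ℕ) : ℝ) < ((r j : ℕ) : ℝ) := by exact_mod_cast h1
  show xv (r i) < xv (r j)
  unfold xv
  linarith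

/-! Vandermonde positivity -/

lemma vdet_pos {k : ℕ} (a : ℕ) (u : Fin k → ℝ) (hu : StrictMono u) (hpos : ∀ i, 0 < u i) :
    0 < (Matrix.of fun i j : Fin k => u i ^ (a + (j : ℕ))).det := by
  have hfac : (Matrix.of fun i j : Fin k => u i ^ (a + (j:ℕ)))
      = Matrix.diagonal (fun i => u i ^ a) * Matrix.vandermonde u := by
    ext i j
    rw [Matrix.diagonal_mul]
    simp [Matrix.vandermonde, pow_add]
  rw [hfac, Matrix.det_mul, Matrix.det_diagonal, Matrix.det_vandermonde]
  refine mul_pos (prod_pos fun i _ => pow_pos (hpos i) a) (prod_pos fun i _ => prod_pos fun j hj => ?_)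
  exact sub_pos.mpr (hu (mem_Ioi.mp hj))

/-! sum of distinct values bounded by top block -/

lemma sum_lt_top (m k : ℕ) (hk : k ≤ m) (f g : Fin k → Fin m)
    (hg : ∀ j, (g j : ℕ) = m - k + (j : ℕ))
    (hf : Function.Injective f)
    (hne : Finset.image f Finset.univ ≠ Finset.image g Finset.univ) :
    ∑ i, ((f i : ℕ)) < ∑ j, ((g j : ℕ)) := by
  have hginj : Function.Injective g := by
    intro a b hab
    have : (g a : ℕ) = (g b : ℕ) := by rw [hab]
    rw [hg a, hg b] at this
    exact Fin.ext (by omega)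
  set T := Finset.image f Finset.univ with hT
  set S := Finset.image g Finset.univ with hS
  have hTc : T.card = k := by rw [hT, card_image_of_injective _ hf, card_univ, Fintype.card_fin]
  have hSc : S.card = k := by rw [hS, card_image_of_injective _ hginj, card_univ, Fintype.card_fin]
  have hfs : ∑ i, ((f i : ℕ)) = ∑ a ∈ T, (a : ℕ) := by
    rw [hT, Finset.sum_image (fun a _ b _ h => hf h)]
  have hgs : ∑ j, ((g j : ℕ)) = ∑ a ∈ S, (a : ℕ) := by
    rw [hS, Finset.sum_image (fun a _ b _ h => hginj h)]
  rw [hfs, hgs]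
  -- T ≠ S, same card
  have hnsub : ¬ T ⊆ S := fun hsub => hne (eq_of_subset_of_card_le hsub (by rw [hTc, hSc]))
  obtain ⟨a₀, ha₀T, ha₀S⟩ := not_subset.mp hnsub
  have hdiffne : (T \ S).Nonempty := ⟨a₀, mem_sdiff.mpr ⟨ha₀T, ha₀S⟩⟩
  have hcard : (T \ S).card = (S \ T).card := card_sdiff_comm (hTc.trans hSc.symm)
  have hlow : ∀ a ∈ T \ S, (a : ℕ) + 1 ≤ m - k := by
    intro a ha
    rcases mem_sdiff.mp ha with ⟨-, haS⟩
    by_contra hcon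
    push_neg at hcon
    have hmk : m - k ≤ (a : ℕ) := by omega
    have hlt : (a : ℕ) - (m - k) < k := by have := a.isLt; omega
    refine haS (mem_image.mpr ⟨⟨(a:ℕ) - (m - k), hlt⟩, mem_univ _, Fin.ext ?_⟩)
    rw [hg]
    show m - k + ((a:ℕ) - (m - k)) = (a:ℕ)
    omega
  have hhigh : ∀ a ∈ S \ T, m - k ≤ (a : ℕ) := by
    intro a ha
    rcases mem_sdiff.mp ha with ⟨haS, -⟩
    rcases mem_image.mp haS with ⟨j, -, rfl⟩
    rw [hg]; omega
  have hmk1 : 1 ≤ m - k := by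
    have := hlow a₀ (mem_sdiff.mpr ⟨ha₀T, ha₀S⟩); omega
  have hc1 : 1 ≤ (T \ S).card := Finset.card_pos.mpr hdiffne
  have h1 : ∑ a ∈ T \ S, (a : ℕ) ≤ (T \ S).card * (m - k - 1) := by
    have := Finset.sum_le_card_nsmul (T \ S) (fun a => (a : ℕ)) (m - k - 1)
      (fun a ha => by have := hlow a ha; show (a:ℕ) ≤ m - k - 1; omega)
    simpa [smul_eq_mul] using this
  have h2 : (S \ T).card * (m - k) ≤ ∑ a ∈ S \ T, (a : ℕ) := by
    have := Finset.card_nsmul_le_sum (S \ T) (fun a => (a : ℕ)) (m - k) (fun a ha => by have := hhigh a ha; show m - k ≤ (a:ℕ); omega)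
    simpa [smul_eq_mul] using this
  have hmul : (T \ S).card * (m - k) = (T \ S).card * (m - k - 1) + (T \ S).card := by
    obtain ⟨Bq, hBq⟩ : ∃ Bq, m - k = Bq + 1 := ⟨m - k - 1, by omega⟩
    rw [hBq]
    simp [Nat.mul_succ]
  have h3 : ∑ a ∈ T \ S, (a : ℕ) < ∑ a ∈ S \ T, (a : ℕ) := by
    rw [← hcard] at h2
    omega
  have hTsplit : ∑ a ∈ T ∩ S, (a:ℕ) + ∑ a ∈ T \ S, (a:ℕ) = ∑ a ∈ T, (a:ℕ) :=
    Finset.sum_inter_add_sum_sdiff T S _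
  have hSsplit : ∑ a ∈ S ∩ T, (a:ℕ) + ∑ a ∈ S \ T, (a:ℕ) = ∑ a ∈ S, (a:ℕ) :=
    Finset.sum_inter_add_sum_sdiff S T _
  rw [Finset.inter_comm] at hSsplit
  omega

lemma exists_perm {k m : ℕ} (e f : Fin k → Fin m) (he : Function.Injective e)
    (hf : Function.Injective f)
    (him : Finset.image f Finset.univ = Finset.image e Finset.univ) :
    ∃ σ : Equiv.Perm (Fin k), ∀ i, f i = e (σ i) := by
  have hmem : ∀ i, ∃ j, e j = f i := by
    intro i
    have : f i ∈ Finset.image e Finset.univ := him ▸ mem_image_of_mem f (mem_univ i)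
    rcases mem_image.mp this with ⟨j, -, hj⟩
    exact ⟨j, hj⟩
  choose g hg using hmem
  have hginj : Function.Injective g := fun a b hab => hf (by rw [← hg a, ← hg b, hab])
  exact ⟨Equiv.ofBijective g (Finite.injective_iff_bijective.mp hginj),
    fun i => by simp [Equiv.ofBijective]; exact (hg i).symm⟩

/-! the matrix -/

noncomputable def Bmat (m n p : ℕ) (ε : Fin p → ℝ) (t : ℝ) : Matrix (Fin m) (Fin n) ℝ :=
  Matrix.of fun a b => ∑ l : Fin m, (sf m p ε (l:ℕ) * t ^ (l:ℕ)) * xv a ^ (l:ℕ) * xv b ^ (l:ℕ)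

noncomputable def DmF {k m n : ℕ} (c : Fin k → Fin n) (f : Fin k → Fin m) : ℝ :=
  (Matrix.of fun i j : Fin k => xv (c j) ^ ((f i : ℕ))).det

lemma key (m n p : ℕ) (hp : 1 ≤ p) (hpm : p ≤ m) (hpn : p ≤ n)
    (ε : Fin p → ℝ) (hε : ∀ i, ε i = 1 ∨ ε i = -1) (kk : Fin p) (k : ℕ) (hkk : k = kk.val + 1)
    (r : Fin k → Fin m) (c : Fin k → Fin n)
    (hr : StrictMono r) (hc : StrictMono c) :
    ∀ᶠ t in atTop, 0 < ε kk * ((Bmat m n p ε t).submatrix r c).det := by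
  have hkm : k ≤ m := by have := kk.isLt; omega
  obtain ⟨e, he⟩ : ∃ e : Fin k → Fin m, ∀ j, ((e j : ℕ)) = m - k + (j : ℕ) :=
    ⟨fun j => ⟨m - k + (j : ℕ), by have := j.isLt; omega⟩, fun j => rfl⟩
  have heinj : Function.Injective e := by
    intro a b hab
    have h : (e a : ℕ) = (e b : ℕ) := by rw [hab]
    rw [he, he] at h
    exact Fin.ext (by omega)
  have hdet : ∀ R : Fin k → Fin k → ℝ,
      (Matrix.of R).det = (Matrix.detRowAlternating (n := Fin k) (R := ℝ)).toMultilinearMap R :=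
    fun _ => rfl
  have expand : ∀ t : ℝ, ((Bmat m n p ε t).submatrix r c).det
      = ∑ f : Fin k → Fin m,
          (∏ i, (sf m p ε ((f i : ℕ)) * t ^ ((f i : ℕ)) * xv (r i) ^ ((f i : ℕ)))) * DmF c f := by
    intro t
    have hmat : (Bmat m n p ε t).submatrix r c
        = Matrix.of (fun i => ∑ l : Fin m,
            (sf m p ε ((l : ℕ)) * t ^ ((l : ℕ)) * xv (r i) ^ ((l : ℕ))) • fun j => xv (c j) ^ ((l : ℕ))) := by
      ext i j
      simp only [Matrix.submatrix_apply, Matrix.of_apply, Bmat, Finset.sum_apply,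
        Pi.smul_apply, smul_eq_mul]
      try exact Finset.sum_congr rfl fun l _ => by ring
    rw [hmat, hdet]
    rw [(Matrix.detRowAlternating (n := Fin k) (R := ℝ)).toMultilinearMap.map_sum
      (fun i (l : Fin m) => (sf m p ε ((l : ℕ)) * t ^ ((l : ℕ)) * xv (r i) ^ ((l : ℕ))) • fun j => xv (c j) ^ ((l : ℕ)))]
    refine Finset.sum_congr rfl fun f _ => ?_
    rw [MultilinearMap.map_smul_univ, smul_eq_mul]
    rfl
  set A : Finset (Fin k → Fin m) := Finset.image (fun σ : Equiv.Perm (Fin k) => (fun i => e (σ i))) Finset.univ with hA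
  set E : ℕ := ∑ j : Fin k, ((e j : ℕ)) with hE
  set Xd : ℝ := (Matrix.of fun a b : Fin k => xv (r b) ^ ((e a : ℕ))).det with hXd
  set Se : ℝ := ∏ j : Fin k, sf m p ε ((e j : ℕ)) with hSe
  set L : ℝ := Se * DmF c e * Xd with hL
  have hlim : ∀ f : Fin k → Fin m,
      Tendsto (fun t : ℝ => (∏ i, (sf m p ε ((f i : ℕ)) * t ^ ((f i : ℕ)) * xv (r i) ^ ((f i : ℕ)))) * DmF c f / t ^ E)
        atTop (nhds (if f ∈ A then (∏ i, sf m p ε ((f i : ℕ))) * (∏ i, xv (r i) ^ ((f i : ℕ))) * DmF c f else 0)) := by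
    intro f
    have hterm : ∀ t : ℝ, (∏ i, (sf m p ε ((f i : ℕ)) * t ^ ((f i : ℕ)) * xv (r i) ^ ((f i : ℕ))))
        = (∏ i, sf m p ε ((f i : ℕ))) * (∏ i, xv (r i) ^ ((f i : ℕ))) * t ^ (∑ i, ((f i : ℕ))) := by
      intro t
      rw [Finset.prod_mul_distrib, Finset.prod_mul_distrib, Finset.prod_pow_eq_pow_sum]
      ring
    by_cases hfA : f ∈ A
    · rw [if_pos hfA]
      rcases Finset.mem_image.mp hfA with ⟨σ, -, hσ⟩
      have hw : (∑ i, ((f i : ℕ))) = E := by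
        rw [← hσ, hE]
        exact Equiv.sum_comp σ (fun j => ((e j : ℕ)))
      have heq : ∀ᶠ t in (atTop : Filter ℝ),
          (∏ i, sf m p ε ((f i : ℕ))) * (∏ i, xv (r i) ^ ((f i : ℕ))) * DmF c f
          = (∏ i, (sf m p ε ((f i : ℕ)) * t ^ ((f i : ℕ)) * xv (r i) ^ ((f i : ℕ)))) * DmF c f / t ^ E := by
        filter_upwards [eventually_ne_atTop (0:ℝ)] with t ht
        rw [hterm t, hw, eq_div_iff (pow_ne_zero E ht)]
        ring
      exact Tendsto.congr' heq tendsto_const_nhds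
    · rw [if_neg hfA]
      by_cases hinj : Function.Injective f
      · have hne : Finset.image f Finset.univ ≠ Finset.image e Finset.univ := by
          intro him
          rcases exists_perm e f heinj hinj him with ⟨σ, hσ⟩
          exact hfA (Finset.mem_image.mpr ⟨σ, Finset.mem_univ σ, funext fun i => (hσ i).symm⟩)
        have hwlt : (∑ i, ((f i : ℕ))) < E := by
          rw [hE]; exact sum_lt_top m k hkm f e (fun j => he j) hinj hne
        have heq : ∀ t : ℝ, (∏ i, (sf m p ε ((f i : ℕ)) * t ^ ((f i : ℕ)) * xv (r i) ^ ((f i : ℕ)))) * DmF c f / t ^ E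
            = ((∏ i, sf m p ε ((f i : ℕ))) * (∏ i, xv (r i) ^ ((f i : ℕ))) * DmF c f) * (t ^ (∑ i, ((f i : ℕ))) / t ^ E) := by
          intro t; rw [hterm t]; ring
        rw [show (0:ℝ) = ((∏ i, sf m p ε ((f i : ℕ))) * (∏ i, xv (r i) ^ ((f i : ℕ))) * DmF c f) * 0 by ring]
        exact (tendsto_congr heq).mpr ((tendsto_pow_div_pow_atTop_zero hwlt).const_mul _)
      · have hD : DmF c f = 0 := by
          rw [Function.not_injective_iff] at hinj
          rcases hinj with ⟨i, j, hfij, hij⟩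
          refine Matrix.det_zero_of_row_eq hij (funext fun j' => ?_)
          show xv (c j') ^ ((f i : ℕ)) = xv (c j') ^ ((f j : ℕ))
          rw [hfij]
        simp only [hD, mul_zero, zero_div]
        exact tendsto_const_nhds
  have hsum : ∑ f : Fin k → Fin m,
      (if f ∈ A then (∏ i, sf m p ε ((f i : ℕ))) * (∏ i, xv (r i) ^ ((f i : ℕ))) * DmF c f else 0) = L := by
    have hinjσ : ∀ σ1 ∈ (Finset.univ : Finset (Equiv.Perm (Fin k))), ∀ σ2 ∈ (Finset.univ : Finset (Equiv.Perm (Fin k))),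
        (fun i => e (σ1 i)) = (fun i => e (σ2 i)) → σ1 = σ2 :=
      fun σ1 _ σ2 _ h => Equiv.ext fun i => heinj (congrFun h i)
    rw [Finset.sum_ite_mem, Finset.univ_inter, hA, Finset.sum_image hinjσ]
    have hterm : ∀ σ : Equiv.Perm (Fin k),
        (∏ i, sf m p ε ((e (σ i) : ℕ))) * (∏ i, xv (r i) ^ ((e (σ i) : ℕ))) * DmF c (fun i => e (σ i))
        = (Se * DmF c e) * (((Equiv.Perm.sign σ : ℤ) : ℝ) * ∏ i, xv (r i) ^ ((e (σ i) : ℕ))) := by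
      intro σ
      have h1 : (∏ i, sf m p ε ((e (σ i) : ℕ))) = Se := by
        rw [hSe]; exact Equiv.prod_comp σ (fun j => sf m p ε ((e j : ℕ)))
      have h2 : DmF c (fun i => e (σ i)) = ((Equiv.Perm.sign σ : ℤ) : ℝ) * DmF c e := by
        have hsub : (Matrix.of fun i j : Fin k => xv (c j) ^ ((e (σ i) : ℕ)))
            = (Matrix.of fun i j : Fin k => xv (c j) ^ ((e i : ℕ))).submatrix σ id := by
          ext i j; rfl
        unfold DmF
        rw [hsub, Matrix.det_permute]
      rw [h1, h2]
      ring
    refine Eq.trans (Finset.sum_congr rfl fun σ _ => hterm σ) ?_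
    rw [← Finset.mul_sum]
    have hXdet : Xd = ∑ σ : Equiv.Perm (Fin k), ((Equiv.Perm.sign σ : ℤ) : ℝ) * ∏ i, xv (r i) ^ ((e (σ i) : ℕ)) := by
      rw [hXd, Matrix.det_apply]
      refine Finset.sum_congr rfl fun σ _ => ?_
      rw [Units.smul_def, zsmul_eq_mul]
      rfl
    rw [← hXdet, hL]
  have htend : Tendsto (fun t : ℝ => ((Bmat m n p ε t).submatrix r c).det / t ^ E) atTop (nhds L) := by
    rw [← hsum]
    refine (tendsto_congr fun t => ?_).mpr (tendsto_finset_sum Finset.univ (fun f _ => hlim f))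
    rw [expand t, Finset.sum_div]
  have hDme : 0 < DmF c e := by
    have htr : (Matrix.of fun i j : Fin k => xv (c j) ^ ((e i : ℕ)))
        = (Matrix.of fun i j : Fin k => xv (c i) ^ ((m - k) + (j : ℕ)))ᵀ := by
      ext i j
      show xv (c j) ^ ((e i : ℕ)) = xv (c j) ^ ((m - k) + (i : ℕ))
      rw [he]
    unfold DmF
    rw [htr, Matrix.det_transpose]
    exact vdet_pos (m - k) (fun i => xv (c i)) (xv_strictMono hc) (fun i => xv_pos _)
  have hXdpos : 0 < Xd := by
    have htr : (Matrix.of fun a b : Fin k => xv (r b) ^ ((e a : ℕ)))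
        = (Matrix.of fun a b : Fin k => xv (r a) ^ ((m - k) + (b : ℕ)))ᵀ := by
      ext a b
      show xv (r b) ^ ((e a : ℕ)) = xv (r b) ^ ((m - k) + (a : ℕ))
      rw [he]
    rw [hXd, htr, Matrix.det_transpose]
    exact vdet_pos (m - k) (fun i => xv (r i)) (xv_strictMono hr) (fun i => xv_pos _)
  have hSeval : Se = ε kk := by
    rw [hSe]
    have h1 : ∀ j : Fin k, sf m p ε ((e j : ℕ)) = (fun jn => sf m p ε (m - k + jn)) ((j : ℕ)) := by
      intro j; rw [he]
    rw [Finset.prod_congr rfl (fun j _ => h1 j),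
      Fin.prod_univ_eq_prod_range (fun jn => sf m p ε (m - k + jn)) k,
      sf_prod m p ε hε k hkm]
    unfold Ff
    rw [dif_pos ⟨hp, by omega⟩]
    congr 1
    apply Fin.ext
    show min (k - 1) (p - 1) = kk.val
    have := kk.isLt
    omega
  have hpos : 0 < ε kk * L := by
    have hsq : ε kk * Se = 1 := by
      rw [hSeval]
      rcases hε kk with h | h <;> rw [h] <;> norm_num
    have hrw : ε kk * L = (ε kk * Se) * (DmF c e * Xd) := by rw [hL]; ring
    rw [hrw, hsq, one_mul]
    exact mul_pos hDme hXdpos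
  have htend2 : Tendsto (fun t : ℝ => ε kk * (((Bmat m n p ε t).submatrix r c).det / t ^ E))
      atTop (nhds (ε kk * L)) := htend.const_mul _
  filter_upwards [htend2.eventually (eventually_gt_nhds hpos), eventually_gt_atTop (0:ℝ)] with t h1 h2
  have ht : (0:ℝ) < t ^ E := pow_pos h2 E
  have h3 : 0 < (ε kk * ((Bmat m n p ε t).submatrix r c).det) / t ^ E := by
    rw [mul_div_assoc]; exact h1
  have h4 := mul_pos h3 ht
  rwa [div_mul_cancel₀ _ (ne_of_gt ht)] at h4

theorem stmt_18 (m n p : ℕ) (hp : 1 ≤ p) (hpm : p ≤ m) (hpn : p ≤ n)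
    (ε : Fin p → ℝ) (hε : ∀ i, ε i = 1 ∨ ε i = -1) :
    ∃ A : Matrix (Fin m) (Fin n) ℝ, IsSSRp p A ε := by
  have hall : ∀ τ : (Σ kk : Fin p, (Fin (kk.val + 1) → Fin m) × (Fin (kk.val + 1) → Fin n)),
      ∀ᶠ t in (atTop : Filter ℝ), StrictMono τ.2.1 → StrictMono τ.2.2 →
        0 < ε τ.1 * ((Bmat m n p ε t).submatrix τ.2.1 τ.2.2).det := by
    rintro ⟨kk, r, c⟩
    by_cases hr : StrictMono r
    · by_cases hc : StrictMono c
      · exact (key m n p hp hpm hpn ε hε kk _ rfl r c hr hc).mono fun t ht _ _ => ht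
      · exact Eventually.of_forall fun t h1 h2 => absurd h2 hc
    · exact Eventually.of_forall fun t h1 h2 => absurd h1 hr
  obtain ⟨t, ht⟩ := (Filter.eventually_all.mpr hall).exists
  exact ⟨Bmat m n p ε t, fun kk r c hr hc => ht ⟨kk, r, c⟩ hr hc⟩
end

section
/- Let n ≥ 2 be an integer, ε = (ε_1, …, ε_{n−1}) ∈ {±1}^{n−1}, and let A be an n×n real matrix that is SSR_{n−1}(ε) and satisfies det A = 0. Then for each η ∈ {±1}, there exists a real number δ ≠ 0 such that the matrix B obtained from A by replacing its (1,1) entry a_{11} with a_{11} + δ (all other entries unchanged) is SSR(ε′), where ε′ = (ε_1, …, ε_{n−1}, η) ∈ {±1}^n. -/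
instance {a b : ℕ} (f : Fin a → Fin b) : Decidable (StrictMono f) :=
  decidable_of_iff (∀ i j : Fin a, i < j → f i < f j) Iff.rfl

lemma smono_id {N : ℕ} (r : Fin N → Fin N) (hr : StrictMono r) : r = id := by
  have h : Set.range r = Set.range (id : Fin N → Fin N) := by
    rw [Set.range_id, Set.range_eq_univ]
    exact Finite.surjective_of_injective hr.injective
  haveI inst : WellFoundedLT (Fin N) := inferInstance
  exact (@StrictMono.range_inj (Fin N) (Fin N) Fin.instLinearOrder (by infer_instance) inst
    r id hr strictMono_id).1 h

lemma det_pert {m : ℕ} (A : Matrix (Fin (m+2)) (Fin (m+2)) ℝ) (δ : ℝ) {s : ℕ}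
    (r c : Fin (s+1) → Fin (m+2)) (hr : StrictMono r) (hc : StrictMono c)
    (hr0 : r 0 = 0) (hc0 : c 0 = 0) :
    ((Matrix.of fun i j => if i = 0 ∧ j = 0 then A i j + δ else A i j).submatrix r c).det
      = (A.submatrix r c).det + δ * (A.submatrix (r ∘ Fin.succ) (c ∘ Fin.succ)).det := by
  set B : Matrix (Fin (m+2)) (Fin (m+2)) ℝ :=
    Matrix.of fun i j => if i = 0 ∧ j = 0 then A i j + δ else A i j with hB
  rw [Matrix.det_succ_row_zero, Matrix.det_succ_row_zero]
  have hminor : ∀ j : Fin (s+1),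
      ((B.submatrix r c).submatrix Fin.succ j.succAbove).det
        = ((A.submatrix r c).submatrix Fin.succ j.succAbove).det := by
    intro j
    congr 1
    ext i k
    simp only [Matrix.submatrix_apply, hB, Matrix.of_apply]
    have : r i.succ ≠ 0 := by
      rw [← hr0]; exact (hr (Fin.succ_pos i)).ne'
    simp [this]
  have hterm : ∀ j : Fin (s+1),
      (-1 : ℝ) ^ (j : ℕ) * (B.submatrix r c) 0 j *
          ((B.submatrix r c).submatrix Fin.succ j.succAbove).det
        = (-1 : ℝ) ^ (j : ℕ) * (A.submatrix r c) 0 j *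
            ((A.submatrix r c).submatrix Fin.succ j.succAbove).det
          + if j = 0 then δ * (A.submatrix (r ∘ Fin.succ) (c ∘ Fin.succ)).det else 0 := by
    intro j
    rw [hminor]
    rcases eq_or_ne j 0 with rfl | hj
    · have h00 : (B.submatrix r c) 0 0 = (A.submatrix r c) 0 0 + δ := by
        simp [hB, Matrix.submatrix_apply, hr0, hc0]
      rw [h00]
      simp only [if_pos rfl, Fin.val_zero, pow_zero, one_mul, Fin.succAbove_zero, if_true,
        Matrix.submatrix_submatrix]
      ring
    · have h0j : (B.submatrix r c) 0 j = (A.submatrix r c) 0 j := by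
        have : c j ≠ 0 := by
          rw [← hc0]; exact (hc (Fin.pos_of_ne_zero hj)).ne'
        simp [hB, Matrix.submatrix_apply, this]
      rw [h0j, if_neg hj, add_zero]
  rw [Finset.sum_congr rfl fun j _ => hterm j, Finset.sum_add_distrib]
  simp

lemma exists_small {T : Type*} [Fintype T] [Nonempty T] (H : T → ℝ) (h : ∀ x, 0 < H x) :
    ∃ d : ℝ, 0 < d ∧ ∀ x, d ≤ H x :=
  ⟨Finset.univ.inf' Finset.univ_nonempty H,
    (Finset.lt_inf'_iff _).2 fun x _ => h x,
    fun x => Finset.inf'_le _ (Finset.mem_univ x)⟩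

theorem stmt_19 (n : ℕ) (hn : 2 ≤ n) (ε : Fin (n - 1) → ℝ)
    (hε : ∀ i, ε i = 1 ∨ ε i = -1)
    (A : Matrix (Fin n) (Fin n) ℝ) (hA : IsSSRp (n - 1) A ε) (hdet : A.det = 0)
    (η : ℝ) (hη : η = 1 ∨ η = -1) :
    ∃ δ : ℝ, δ ≠ 0 ∧
      IsSSRp n
        (Matrix.of fun i j : Fin n =>
          if i = (⟨0, by omega⟩ : Fin n) ∧ j = (⟨0, by omega⟩ : Fin n) then A i j + δ else A i j)
        (fun i => if h : i.val < n - 1 then ε ⟨i.val, h⟩ else η) := by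
  obtain ⟨m, rfl⟩ : ∃ m, n = m + 2 := ⟨n - 2, by omega⟩
  have h0 : (⟨0, by omega⟩ : Fin (m + 2)) = 0 := rfl
  -- the relevant (n-1)-minor
  set M : ℝ := (A.submatrix (Fin.succ : Fin (m+1) → Fin (m+2)) Fin.succ).det with hMdef
  have hM : 0 < ε ⟨m, Nat.lt_succ_self m⟩ * M :=
    hA ⟨m, Nat.lt_succ_self m⟩ Fin.succ Fin.succ Fin.strictMono_succ Fin.strictMono_succ
  have hMne : M ≠ 0 := by
    intro h; rw [h, mul_zero] at hM; exact lt_irrefl 0 hM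
  clear_value M
  have hηne : η ≠ 0 := by rcases hη with h | h <;> rw [h] <;> norm_num
  -- all constraints
  let T : Type := Σ s : Fin (m+1),
    {p : (Fin (s.val+1) → Fin (m+2)) × (Fin (s.val+1) → Fin (m+2)) //
      StrictMono p.1 ∧ StrictMono p.2}
  have hle : ((⟨0, Nat.succ_pos m⟩ : Fin (m+1)) : ℕ) + 1 ≤ m + 2 :=
    Nat.succ_le_succ (Nat.zero_le _)
  haveI : Nonempty T :=
    ⟨⟨⟨0, Nat.succ_pos m⟩, ⟨(Fin.castLE hle, Fin.castLE hle),
      Fin.strictMono_castLE hle, Fin.strictMono_castLE hle⟩⟩⟩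
  obtain ⟨δ0, hδ0pos, hδ0le⟩ :=
    exists_small (T := T) (fun x =>
      ε x.1 * (A.submatrix x.2.1.1 x.2.1.2).det /
        (|(A.submatrix (x.2.1.1 ∘ Fin.succ) (x.2.1.2 ∘ Fin.succ)).det| + 1))
      (by
        rintro ⟨s, ⟨⟨r, c⟩, hr, hc⟩⟩
        exact div_pos (hA s r c hr hc) (by positivity))
  refine ⟨η * M * (δ0 / (2 * (|M| + 1))), ?_, ?_⟩
  · exact mul_ne_zero (mul_ne_zero hηne hMne) (div_ne_zero hδ0pos.ne' (by positivity))
  set δ : ℝ := η * M * (δ0 / (2 * (|M| + 1))) with hδdef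
  clear_value δ
  have hδabs : |δ| ≤ δ0 / 2 := by
    have hη1 : |η| = 1 := by rcases hη with h | h <;> rw [h] <;> norm_num
    rw [hδdef, abs_mul, abs_mul, hη1, one_mul,
      abs_of_nonneg (by positivity : (0:ℝ) ≤ δ0 / (2 * (|M| + 1)))]
    rw [mul_div_assoc', div_le_div_iff₀ (by positivity) (by norm_num)]
    nlinarith [abs_nonneg M, hδ0pos.le]
  have hδne : δ ≠ 0 := by
    rw [hδdef]
    exact mul_ne_zero (mul_ne_zero hηne hMne) (div_ne_zero hδ0pos.ne' (by positivity))
  have hδpos : 0 < |δ| := abs_pos.2 hδne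
  have hηδM : 0 < η * (δ * M) := by
    have he : η * (δ * M) = η ^ 2 * M ^ 2 * (δ0 / (2 * (|M| + 1))) := by
      rw [hδdef]; ring
    have hη2 : η ^ 2 = 1 := by rcases hη with h | h <;> rw [h] <;> norm_num
    rw [he, hη2, one_mul]
    have : 0 < M ^ 2 := by positivity
    positivity
  simp only [h0]
  intro kk r c hr hc
  obtain ⟨s, hslt⟩ := kk
  beta_reduce
  by_cases hs : s < m + 2 - 1
  · rw [dif_pos hs]
    by_cases h00 : r 0 = 0 ∧ c 0 = 0
    · rw [det_pert A δ r c hr hc h00.1 h00.2]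
      have hx : δ0 ≤ ε ⟨s, hs⟩ * (A.submatrix r c).det /
          (|(A.submatrix (r ∘ Fin.succ) (c ∘ Fin.succ)).det| + 1) :=
        hδ0le ⟨⟨s, hs⟩, ⟨(r, c), hr, hc⟩⟩
      set P : ℝ := ε ⟨s, hs⟩ * (A.submatrix r c).det with hPdef
      set Q : ℝ := |(A.submatrix (r ∘ Fin.succ) (c ∘ Fin.succ)).det| with hQdef
      have hP : 0 < P := hA ⟨s, hs⟩ r c hr hc
      have hQ : 0 ≤ Q := abs_nonneg _
      have h1 : |δ| ≤ P / (2 * (Q + 1)) := by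
        refine hδabs.trans ?_
        rw [div_le_div_iff₀ (by norm_num) (by positivity)]
        calc δ0 * (2 * (Q + 1)) = (δ0 * (Q + 1)) * 2 := by ring
          _ ≤ P * 2 := by
              have h2 : δ0 * (Q + 1) ≤ P := by
                have := (le_div_iff₀ (by positivity : (0:ℝ) < Q + 1)).1 hx
                linarith
              linarith
      have h2 : |δ| * (2 * (Q + 1)) ≤ P := (le_div_iff₀ (by positivity)).1 h1
      have h3 : |δ * (A.submatrix (r ∘ Fin.succ) (c ∘ Fin.succ)).det| = |δ| * Q := by
        rw [abs_mul, hQdef]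
      have h4 : |δ * (A.submatrix (r ∘ Fin.succ) (c ∘ Fin.succ)).det| < P := by
        rw [h3]; nlinarith
      have hε1 : |ε ⟨s, hs⟩| = 1 := by rcases hε ⟨s, hs⟩ with h | h <;> rw [h] <;> norm_num
      have h5 : |ε ⟨s, hs⟩ * (δ * (A.submatrix (r ∘ Fin.succ) (c ∘ Fin.succ)).det)| < P := by
        rw [abs_mul, hε1, one_mul]; exact h4
      have h6 := neg_abs_le (ε ⟨s, hs⟩ * (δ * (A.submatrix (r ∘ Fin.succ) (c ∘ Fin.succ)).det))
      have h7 : ε ⟨s, hs⟩ * ((A.submatrix r c).det +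
          δ * (A.submatrix (r ∘ Fin.succ) (c ∘ Fin.succ)).det)
          = P + ε ⟨s, hs⟩ * (δ * (A.submatrix (r ∘ Fin.succ) (c ∘ Fin.succ)).det) := by
        rw [hPdef]; ring
      rw [h7]
      linarith
    · have heq : (Matrix.of fun i j =>
          if i = (0 : Fin (m+2)) ∧ j = (0 : Fin (m+2)) then A i j + δ else A i j).submatrix r c
            = A.submatrix r c := by
        ext i j
        simp only [Matrix.submatrix_apply, Matrix.of_apply]
        have : ¬(r i = 0 ∧ c j = 0) := by
          rintro ⟨h1, h2⟩
          exact h00 ⟨Fin.le_zero_iff.1 (h1 ▸ hr.monotone (Fin.zero_le i)),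
            Fin.le_zero_iff.1 (h2 ▸ hc.monotone (Fin.zero_le j))⟩
        simp [this]
      rw [heq]
      exact hA ⟨s, hs⟩ r c hr hc
  · rw [dif_neg hs]
    have hsm : s = m + 1 := by omega
    subst hsm
    have hr' := smono_id r hr
    have hc' := smono_id c hc
    subst hr'; subst hc'
    rw [Matrix.submatrix_id_id]
    have hkey := det_pert A δ (id : Fin (m+2) → Fin (m+2)) id strictMono_id strictMono_id rfl rfl
    simp only [Matrix.submatrix_id_id, Function.id_comp] at hkey
    rw [hdet, zero_add, ← hMdef] at hkey
    rw [hkey]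
    exact hηδM
end
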